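/- arXiv:1505.02359 — 5 statements merged into one kernel-verified Lean document; each statement's English description precedes it below -/
import Mathlib

section
/- Let E be a locally convex topological vector space over ℝ and E' its topological dual. If the evaluation mapping ev : E × E' → ℝ, ev(x, λ) = λ(x), is jointly continuous (with E' given any vector topology compatible with the duality), then E is normable. -/
open Set Filter Topology Bornology Pointwise

section Aux

variable {E : Type*} [AddCommGroup E] [Module ℝ E] [TopologicalSpace E]
    [IsTopologicalAddGroup E] [ContinuousSMul ℝ E]

/-- A linear functional dominated by a continuous seminorm is continuous. -/
private lemma aux_cont_of_dominated (p : Seminorm ℝ E) (hp : Continuous p)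
    (g : E →ₗ[ℝ] ℝ) (hg : ∀ y, |g y| ≤ p y) : Continuous g := by
  refine continuous_of_continuousAt_zero g ?_
  rw [ContinuousAt, map_zero]
  have h0 : Tendsto (fun y => (p y : ℝ)) (𝓝 0) (𝓝 0) := by
    simpa [map_zero] using hp.tendsto 0
  exact squeeze_zero_norm (fun y => by simpa [Real.norm_eq_abs] using hg y) h0

/-- Hahn-Banach: attain a continuous seminorm by a dominated continuous functional. -/
private lemma aux_hb (p : Seminorm ℝ E) (hp : Continuous p) (x : E) :
    ∃ l : E →L[ℝ] ℝ, (∀ y, |l y| ≤ p y) ∧ l x = p x := by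
  by_cases hx : x = 0
  · exact ⟨0, fun y => by simpa using apply_nonneg p y, by simp [hx]⟩
  have H : ∀ c : ℝ, c • x = 0 → c • (p x : ℝ) = 0 := by
    intro c hc
    rcases smul_eq_zero.1 hc with h | h
    · simp [h]
    · exact absurd h hx
  set f : E →ₗ.[ℝ] ℝ := LinearPMap.mkSpanSingleton' x (p x) H with hf
  have hfle : ∀ z : f.domain, f z ≤ p z := by
    rintro ⟨z, hz⟩
    obtain ⟨c, rfl⟩ := Submodule.mem_span_singleton.1 hz
    rw [show f ⟨c • x, hz⟩ = c • (p x : ℝ) from LinearPMap.mkSpanSingleton'_apply x (p x) H c hz]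
    calc c • (p x : ℝ) = c * p x := rfl
    _ ≤ |c| * p x := mul_le_mul_of_nonneg_right (le_abs_self c) (apply_nonneg p x)
    _ = p (c • x) := by rw [map_smul_eq_mul]; simp [Real.norm_eq_abs]
  obtain ⟨g, hg1, hg2⟩ := exists_extension_of_le_sublinear f p
    (fun c hc y => by rw [map_smul_eq_mul]; simp [Real.norm_eq_abs, abs_of_pos hc])
    (fun y z => map_add_le_add p y z) hfle
  have hgdom : ∀ y, |g y| ≤ p y := by
    intro y
    rw [abs_le]
    constructor
    · have := hg2 (-y); simp only [map_neg] at this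
      linarith [(map_neg_eq_map p y).symm ▸ this]
    · exact hg2 y
  have hgx : g x = p x := by
    have hxmem : x ∈ f.domain := Submodule.mem_span_singleton_self x
    have := hg1 ⟨x, hxmem⟩
    rw [show f ⟨x, hxmem⟩ = p x from LinearPMap.mkSpanSingleton'_apply_self x (p x) H hxmem] at this
    simpa using this
  exact ⟨⟨g, aux_cont_of_dominated p hp g hgdom⟩, hgdom, hgx⟩

/-- Mackey's theorem: a weakly bounded set is von Neumann bounded. -/
private lemma aux_mackey [LocallyConvexSpace ℝ E] (U : Set E)
    (hweak : ∀ l : E →L[ℝ] ℝ, ∃ c : ℝ, ∀ x ∈ U, |l x| ≤ c) :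
    IsVonNBounded ℝ U := by
  intro W hW
  obtain ⟨W', ⟨hW'0, hW'open, hW'bal, hW'conv⟩, hW'W⟩ :=
    (nhds_hasBasis_absConvex_open ℝ E).mem_iff.mp hW
  have hW'nhds : W' ∈ 𝓝 (0 : E) := hW'open.mem_nhds hW'0
  have habs : Absorbent ℝ W' := absorbent_nhds_zero hW'nhds
  set p : Seminorm ℝ E := gaugeSeminorm hW'bal hW'conv habs with hpdef
  have hpgauge : ∀ y, p y = gauge W' y := fun y => rfl
  have hpcont : Continuous p := by
    have := continuous_gauge (E := E) hW'conv hW'nhds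
    simpa [funext hpgauge] using this
  -- the "polar" of p in the weak dual
  set K : Set (WeakDual ℝ E) := {l | ∀ y, |l y| ≤ p y} with hKdef
  have h0K : (0 : WeakDual ℝ E) ∈ K := fun y => by
    rw [show ((0 : WeakDual ℝ E) y) = 0 from rfl, abs_zero]; exact apply_nonneg p y
  have hKconv : Convex ℝ K := by
    intro l1 h1 l2 h2 a b ha hb hab y
    have : (a • l1 + b • l2) y = a * l1 y + b * l2 y := rfl
    rw [this]
    calc |a * l1 y + b * l2 y| ≤ |a * l1 y| + |b * l2 y| := abs_add_le _ _
    _ = a * |l1 y| + b * |l2 y| := by rw [abs_mul, abs_mul, abs_of_nonneg ha, abs_of_nonneg hb]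
    _ ≤ a * p y + b * p y := by gcongr; exacts [h1 y, h2 y]
    _ = p y := by rw [← add_mul, hab, one_mul]
  -- compactness of K (Banach-Alaoglu)
  have hemb : IsEmbedding (fun (l : WeakDual ℝ E) (y : E) => l y) :=
    WeakBilin.isEmbedding (B := topDualPairing ℝ E) ContinuousLinearMap.coe_injective
  have hKcomp : IsCompact K := by
    rw [hemb.isCompact_iff]
    set S : Set (E → ℝ) := {f | (∀ y, f y ∈ Icc (-(p y : ℝ)) (p y)) ∧
      (∀ y z, f (y + z) = f y + f z) ∧ (∀ (c : ℝ) y, f (c • y) = c * f y)} with hSdef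
    have himg : (fun (l : WeakDual ℝ E) (y : E) => l y) '' K = S := by
      apply Subset.antisymm
      · rintro _ ⟨l, hl, rfl⟩
        refine ⟨fun y => ?_, fun y z => map_add l y z, fun c y => by
          show l (c • y) = c * l y
          rw [map_smul]; rfl⟩
        have := hl y
        rw [abs_le] at this
        exact ⟨this.1, this.2⟩
      · rintro f ⟨hf1, hf2, hf3⟩
        set g : E →ₗ[ℝ] ℝ := { toFun := f, map_add' := hf2, map_smul' := hf3 } with hgdef
        have hgle : ∀ y, |g y| ≤ p y := fun y => abs_le.mpr ⟨(hf1 y).1, (hf1 y).2⟩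
        exact ⟨(⟨g, aux_cont_of_dominated p hpcont g hgle⟩ : E →L[ℝ] ℝ),
          fun y => hgle y, rfl⟩
    rw [himg]
    have hsub : S ⊆ univ.pi (fun y => Icc (-(p y : ℝ)) (p y)) := fun f hf y _ => hf.1 y
    refine IsCompact.of_isClosed_subset (isCompact_univ_pi fun y => isCompact_Icc) ?_ hsub
    have h1 : IsClosed {f : E → ℝ | ∀ y, f y ∈ Icc (-(p y : ℝ)) (p y)} := by
      simp only [setOf_forall]
      exact isClosed_iInter fun y => (isClosed_Icc).preimage (continuous_apply y)
    have h2 : IsClosed {f : E → ℝ | ∀ y z, f (y + z) = f y + f z} := by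
      simp only [setOf_forall]
      refine isClosed_iInter fun y => isClosed_iInter fun z => ?_
      exact isClosed_eq (continuous_apply _) ((continuous_apply y).add (continuous_apply z))
    have h3 : IsClosed {f : E → ℝ | ∀ (c : ℝ) y, f (c • y) = c * f y} := by
      simp only [setOf_forall]
      refine isClosed_iInter fun c => isClosed_iInter fun y => ?_
      exact isClosed_eq (continuous_apply _) (continuous_const.mul (continuous_apply y))
    have hSeq : S = {f : E → ℝ | ∀ y, f y ∈ Icc (-(p y : ℝ)) (p y)} ∩
        ({f | ∀ y z, f (y + z) = f y + f z} ∩ {f | ∀ (c : ℝ) y, f (c • y) = c * f y}) := by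
      ext f
      constructor
      · rintro ⟨a, b, c⟩; exact ⟨a, b, c⟩
      · rintro ⟨a, b, c⟩; exact ⟨a, b, c⟩
    rw [hSeq]
    exact h1.inter (h2.inter h3)
  -- each element of K is (weakly) bounded on U by some natural number
  have hcover : ∀ l : WeakDual ℝ E, ∃ n : ℕ, ∀ x ∈ U, |l x| ≤ n := by
    intro l
    obtain ⟨c, hc⟩ := hweak l
    obtain ⟨n, hn⟩ := exists_nat_ge c
    exact ⟨n, fun x hx => (hc x hx).trans hn⟩
  haveI : CompactSpace K := isCompact_iff_compactSpace.mp hKcomp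
  haveI : Nonempty K := ⟨⟨0, h0K⟩⟩
  set F : ℕ → Set K := fun n => {l : K | ∀ x ∈ U, |(l : WeakDual ℝ E) x| ≤ n} with hFdef
  have hFc : ∀ n, IsClosed (F n) := by
    intro n
    have hFn : F n = ⋂ x ∈ U, {l : K | |(l : WeakDual ℝ E) x| ≤ n} := by
      ext l; simp [hFdef]
    rw [hFn]
    refine isClosed_biInter fun x hx => ?_
    exact isClosed_le (((WeakDual.eval_continuous x).comp continuous_subtype_val).abs)
      continuous_const
  have hFU : ⋃ n, F n = univ := by
    rw [eq_univ_iff_forall]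
    intro l
    obtain ⟨n, hn⟩ := hcover l
    exact mem_iUnion.mpr ⟨n, fun x hx => hn x hx⟩
  obtain ⟨n0, hn0⟩ := nonempty_interior_of_iUnion_of_closed hFc hFU
  obtain ⟨l0, hl0int⟩ := hn0
  obtain ⟨O, hOsub, hOopen, hl0O⟩ := mem_interior.mp hl0int
  obtain ⟨O', hO'open, hO'⟩ := isOpen_induced_iff.mp hOopen
  have hl0n0 : ∀ x ∈ U, |(l0 : WeakDual ℝ E) x| ≤ n0 := hOsub hl0O
  set l0v : WeakDual ℝ E := (l0 : WeakDual ℝ E) with hl0vdef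
  have hl0O' : l0v ∈ O' := by
    have : l0 ∈ (Subtype.val ⁻¹' O' : Set K) := by rw [hO']; exact hl0O
    exact this
  -- tube lemma to get a uniform scaling factor
  set φ : ℝ × WeakDual ℝ E → WeakDual ℝ E := fun q => l0v + q.1 • (q.2 - l0v) with hφdef
  have hφcont : Continuous φ :=
    continuous_const.add (continuous_fst.smul (continuous_snd.sub continuous_const))
  have hsub2 : ({0} : Set ℝ) ×ˢ K ⊆ φ ⁻¹' O' := by
    rintro ⟨t, l⟩ ⟨ht, hl⟩
    simp only [mem_singleton_iff] at ht
    have hφ0 : φ (t, l) = l0v := by rw [hφdef]; simp [ht]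
    rw [mem_preimage, hφ0]; exact hl0O'
  obtain ⟨u, v, huo, hvo, h0u, hKv, huv⟩ :=
    generalized_tube_lemma isCompact_singleton hKcomp (hO'open.preimage hφcont) hsub2
  obtain ⟨ε, hε, hball⟩ := Metric.isOpen_iff.mp huo 0 (h0u rfl)
  set t0 : ℝ := min (ε/2) 1 with ht0def
  have ht0pos : 0 < t0 := lt_min (half_pos hε) one_pos
  have ht0le1 : t0 ≤ 1 := min_le_right _ _
  have ht0u : t0 ∈ u := by
    apply hball
    rw [Metric.mem_ball, Real.dist_eq, sub_zero, abs_of_pos ht0pos]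
    calc t0 ≤ ε/2 := min_le_left _ _
    _ < ε := half_lt_self hε
  set M : ℝ := n0 + 2*n0/t0 with hMdef
  have hM0 : 0 ≤ M := by
    have h2 : (0:ℝ) ≤ 2*(n0:ℝ)/t0 := div_nonneg (by positivity) ht0pos.le
    have h3 : (0:ℝ) ≤ (n0:ℝ) := Nat.cast_nonneg n0
    rw [hMdef]; linarith
  -- uniform bound on K over U
  have hkey : ∀ l ∈ K, ∀ x ∈ U, |l x| ≤ M := by
    intro l hl x hx
    set m : WeakDual ℝ E := φ (t0, l) with hmdef
    have hmO' : m ∈ O' := huv (mk_mem_prod ht0u (hKv hl))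
    have hmK : m ∈ K := by
      have halg : m = (1 - t0) • l0v + t0 • l := by
        rw [hmdef, hφdef]; simp only; rw [smul_sub, sub_smul, one_smul]; abel
      rw [halg]
      exact hKconv l0.2 hl (by linarith) ht0pos.le (by ring)
    have hmn0 : ∀ x' ∈ U, |m x'| ≤ n0 := by
      have hmem : (⟨m, hmK⟩ : K) ∈ O := by
        rw [← hO']; exact hmO'
      exact hOsub hmem
    have hevalm : m x = l0v x + t0 * (l x - l0v x) := rfl
    have h1 : |l0v x| ≤ n0 := hl0n0 x hx
    have h2 : |m x| ≤ n0 := hmn0 x hx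
    have h3 : t0 * |l x - l0v x| ≤ 2 * n0 := by
      have hb : |m x - l0v x| ≤ 2 * n0 := by
        calc |m x - l0v x| ≤ |m x| + |l0v x| := by
              have := abs_add_le (m x) (-(l0v x)); simpa [sub_eq_add_neg] using this
        _ ≤ (n0:ℝ) + n0 := add_le_add h2 h1
        _ = 2 * n0 := by ring
      calc t0 * |l x - l0v x| = |t0 * (l x - l0v x)| := by
            rw [abs_mul, abs_of_pos ht0pos]
      _ = |m x - l0v x| := by congr 1; rw [hevalm]; ring
      _ ≤ 2 * n0 := hb
    have h4 : |l x - l0v x| ≤ 2 * n0 / t0 := by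
      rw [le_div_iff₀ ht0pos]
      linarith
    calc |l x| = |l0v x + (l x - l0v x)| := by congr 1; ring
    _ ≤ |l0v x| + |l x - l0v x| := abs_add_le _ _
    _ ≤ (n0:ℝ) + 2 * n0 / t0 := add_le_add h1 h4
    _ = M := by rw [hMdef]
  -- bound the gauge on U via Hahn-Banach
  have hpU : ∀ x ∈ U, p x ≤ M := by
    intro x hx
    obtain ⟨l, hl, hlx⟩ := aux_hb p hpcont x
    have hlK : (l : WeakDual ℝ E) ∈ K := fun y => hl y
    calc (p x : ℝ) = l x := hlx.symm
    _ ≤ |l x| := le_abs_self _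
    _ ≤ M := hkey l hlK x hx
  -- conclude absorption
  rw [absorbs_iff_norm]
  refine ⟨M + 1, fun c hc => fun x hx => ?_⟩
  have hgauge : gauge W' x < ‖c‖ := by
    calc gauge W' x ≤ M := by rw [← hpgauge x]; exact hpU x hx
    _ < M + 1 := by linarith
    _ ≤ ‖c‖ := hc
  obtain ⟨b, hb0, hbc, hxb⟩ := exists_lt_of_gauge_lt habs hgauge
  have hsm : (b • W' : Set E) ⊆ (c • W' : Set E) := by
    refine hW'bal.smul_mono ?_
    rw [Real.norm_eq_abs, abs_of_pos hb0]
    exact hbc.le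
  exact smul_set_mono hW'W (hsm hxb)

end Aux


/- STATEMENT 0: If the evaluation map ev : E × E' → ℝ on a locally convex
topological vector space and its topological dual is jointly continuous
(i.e. there are neighborhoods U of 0 in E and U' of 0 in E' -- in any vector
topology compatible with the duality, so in particular U' is absorbent --
with ev(U × U') ⊆ [-1,1]), then E is normable.  By Kolmogorov's criterion,
normability of a locally convex space means having a bounded open
neighborhood of zero. -/
theorem evaluation_jointly_continuous_implies_normable
    {E : Type*} [AddCommGroup E] [Module ℝ E] [TopologicalSpace E]
    [IsTopologicalAddGroup E] [ContinuousSMul ℝ E] [LocallyConvexSpace ℝ E]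
    (U : Set E) (hU : U ∈ nhds (0 : E))
    (U' : Set (E →L[ℝ] ℝ)) (hU'abs : Absorbent ℝ U')
    (hev : ∀ x ∈ U, ∀ l ∈ U', |l x| ≤ 1) :
    ∃ V : Set E, V ∈ nhds (0 : E) ∧ IsOpen V ∧ Bornology.IsVonNBounded ℝ V := by
  have hweak : ∀ l : E →L[ℝ] ℝ, ∃ c : ℝ, ∀ x ∈ U, |l x| ≤ c := by
    intro l
    have habs := hU'abs l
    rw [absorbs_iff_norm] at habs
    obtain ⟨r, hr⟩ := habs
    set c : ℝ := max r 1 with hcdef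
    have hc : r ≤ ‖c‖ := by
      rw [Real.norm_eq_abs, abs_of_pos (lt_of_lt_of_le one_pos (le_max_right r 1))]
      exact le_max_left r 1
    obtain ⟨l', hl', rfl⟩ := hr c hc (mem_singleton l)
    refine ⟨|c|, fun x hx => ?_⟩
    have hsm : (c • l') x = c * l' x := rfl
    rw [hsm, abs_mul]
    calc |c| * |l' x| ≤ |c| * 1 := by
          gcongr
          exact hev x hx l' hl'
    _ = |c| := mul_one _
  have hUb : IsVonNBounded ℝ U := aux_mackey U hweak
  exact ⟨interior U, isOpen_interior.mem_nhds (mem_interior_iff_mem_nhds.mpr hU),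
    isOpen_interior, hUb.subset interior_subset⟩
end

section
/- Special curve lemma: Let E be a locally convex vector space and (x_n) a sequence converging fast to x in E, i.e., for each k ∈ ℕ the set {n^k (x_n - x) : n ∈ ℕ} is bounded in E. Then there exists a smooth curve c : ℝ → E with c(1/n) = x_n for all n ≥ 1 and c(0) = x. -/
open Filter Topology Set

noncomputable section

namespace SpecialCurveAux

/-! Auxiliary construction for the special curve lemma.  The curve is built
from `Real.smoothTransition` bumps on the intervals `(1/(n+1), 1/n]`. -/

def aff (n : ℕ) (t : ℝ) : ℝ := 3 * n * (n + 1) * (t - 1 / (n + 1)) - 1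

def dsig (k n : ℕ) (t : ℝ) : ℝ :=
  (3 * n * (n + 1) : ℝ) ^ k * iteratedDeriv k Real.smoothTransition (aff n t)

lemma aff_continuous (n : ℕ) : Continuous (aff n) := by unfold aff; fun_prop

lemma aff_hasDerivAt (n : ℕ) (t : ℝ) :
    HasDerivAt (aff n) (3 * n * (n + 1)) t := by
  have h : HasDerivAt (fun t : ℝ => 3 * n * (n+1) * (t - 1/(n+1)) - 1)
      (3 * n * (n + 1) * 1) t :=
    (((hasDerivAt_id t).sub_const _).const_mul _).sub_const 1
  rw [mul_one] at h
  exact h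

lemma psi_contDiff : ContDiff ℝ ((⊤ : ℕ∞) : WithTop ℕ∞) Real.smoothTransition :=
  Real.smoothTransition.contDiff

lemma psi_hasDerivAt (k : ℕ) (y : ℝ) :
    HasDerivAt (iteratedDeriv k Real.smoothTransition)
      (iteratedDeriv (k + 1) Real.smoothTransition y) y := by
  have h := (psi_contDiff.differentiable_iteratedDeriv k (by
    exact_mod_cast WithTop.coe_lt_top _)) y
  rw [iteratedDeriv_succ]
  exact h.hasDerivAt

lemma psi_continuous_iteratedDeriv (k : ℕ) :
    Continuous (iteratedDeriv k Real.smoothTransition) :=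
  psi_contDiff.continuous_iteratedDeriv k (by exact_mod_cast le_top)

lemma dsig_hasDerivAt (k n : ℕ) (t : ℝ) :
    HasDerivAt (dsig k n) (dsig (k + 1) n t) t := by
  have h := ((psi_hasDerivAt k (aff n t)).comp t (aff_hasDerivAt n t)).const_mul
    ((3 * n * (n + 1) : ℝ) ^ k)
  exact h.congr_deriv (by unfold dsig; ring)

lemma dsig_continuous (k n : ℕ) : Continuous (dsig k n) :=
  continuous_const.mul ((psi_continuous_iteratedDeriv k).comp (aff_continuous n))

lemma iteratedDeriv_succ_eventuallyEq_zero {f : ℝ → ℝ} {y c : ℝ}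
    (h : f =ᶠ[𝓝 y] fun _ => c) (k : ℕ) :
    iteratedDeriv (k + 1) f =ᶠ[𝓝 y] fun _ => 0 := by
  induction k with
  | zero =>
      have := h.deriv
      rw [iteratedDeriv_one]
      simpa [deriv_const'] using this
  | succ m ih =>
      have := ih.deriv
      rw [iteratedDeriv_succ]
      simpa [deriv_const'] using this

lemma psi_eventually_zero {y : ℝ} (h : y < 0) :
    Real.smoothTransition =ᶠ[𝓝 y] fun _ => 0 := by
  filter_upwards [Iio_mem_nhds h] with z hz
  exact Real.smoothTransition.zero_of_nonpos (le_of_lt hz)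

lemma psi_eventually_one {y : ℝ} (h : 1 < y) :
    Real.smoothTransition =ᶠ[𝓝 y] fun _ => 1 := by
  filter_upwards [Ioi_mem_nhds h] with z hz
  exact Real.smoothTransition.one_of_one_le (le_of_lt hz)

lemma sig_eq_zero {n : ℕ} {t : ℝ} (h : aff n t ≤ 0) : dsig 0 n t = 0 := by
  simp [dsig, Real.smoothTransition.zero_of_nonpos h]

lemma sig_eq_one {n : ℕ} {t : ℝ} (h : 1 ≤ aff n t) : dsig 0 n t = 1 := by
  simp [dsig, Real.smoothTransition.one_of_one_le h]

lemma dsig_succ_eq_zero_of_neg {n : ℕ} {t : ℝ} (h : aff n t < 0) (k : ℕ) :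
    dsig (k + 1) n t = 0 := by
  have := (iteratedDeriv_succ_eventuallyEq_zero (psi_eventually_zero h) k).self_of_nhds
  simp [dsig, this]

lemma dsig_succ_eq_zero_of_gt {n : ℕ} {t : ℝ} (h : 1 < aff n t) (k : ℕ) :
    dsig (k + 1) n t = 0 := by
  have := (iteratedDeriv_succ_eventuallyEq_zero (psi_eventually_one h) k).self_of_nhds
  simp [dsig, this]

lemma psi_bound (k : ℕ) : ∃ M : ℝ, 0 ≤ M ∧
    ∀ y : ℝ, |iteratedDeriv k Real.smoothTransition y| ≤ M := by
  obtain ⟨M, hM⟩ := (isCompact_Icc (a := (0:ℝ)) (b := 1)).exists_bound_of_continuousOn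
    (psi_continuous_iteratedDeriv k).continuousOn
  refine ⟨max M 1, by positivity, fun y => ?_⟩
  rcases le_or_gt y 1 with hy1 | hy1
  · rcases le_or_gt 0 y with hy0 | hy0
    · exact le_trans (by simpa using hM y ⟨hy0, hy1⟩) (le_max_left _ _)
    · cases k with
      | zero =>
          simp only [iteratedDeriv_zero]
          rw [Real.smoothTransition.zero_of_nonpos hy0.le]
          simp
      | succ m =>
          rw [(iteratedDeriv_succ_eventuallyEq_zero (psi_eventually_zero hy0) m).self_of_nhds]
          simp
  · cases k with
    | zero =>
        simp only [iteratedDeriv_zero]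
        rw [Real.smoothTransition.one_of_one_le hy1.le]
        simp
    | succ m =>
        rw [(iteratedDeriv_succ_eventuallyEq_zero (psi_eventually_one hy1) m).self_of_nhds]
        simp

lemma dsig_bound (k : ℕ) : ∃ M : ℝ, 0 ≤ M ∧
    ∀ (n : ℕ) (t : ℝ), |dsig k n t| ≤ M * (3 * n * (n + 1)) ^ k := by
  obtain ⟨M, hM0, hM⟩ := psi_bound k
  refine ⟨M, hM0, fun n t => ?_⟩
  rw [dsig, abs_mul, abs_pow]
  have h1 : |(3 * n * (n + 1) : ℝ)| = (3 * n * (n + 1) : ℝ) := by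
    rw [abs_of_nonneg]; positivity
  rw [h1, mul_comm]
  exact mul_le_mul_of_nonneg_right (hM _) (by positivity)

lemma aff_self (n : ℕ) (hn : 1 ≤ n) : aff n (1 / n) = 2 := by
  have h0 : (n : ℝ) ≠ 0 := Nat.cast_ne_zero.mpr (by omega)
  have h1 : (n : ℝ) + 1 ≠ 0 := by positivity
  unfold aff
  field_simp
  ring

lemma aff_pred_self (n : ℕ) (hn : 1 ≤ n) : aff (n - 1) (1 / n) = -1 := by
  have h : ((n - 1 : ℕ) : ℝ) + 1 = (n : ℝ) := by
    have : ((n - 1 : ℕ) : ℝ) = (n : ℝ) - 1 := by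
      push_cast [Nat.cast_sub hn]; ring
    rw [this]; ring
  unfold aff
  rw [h]
  ring

lemma floor_eq_of_mem {t : ℝ} {n : ℕ} (hn : 1 ≤ n)
    (h1 : 1 / ((n : ℝ) + 1) < t) (h2 : t ≤ 1 / (n : ℝ)) : ⌊1 / t⌋₊ = n := by
  have hn0 : (0:ℝ) < n := by exact_mod_cast hn
  have ht : 0 < t := lt_trans (by positivity) h1
  rw [Nat.floor_eq_iff (by positivity)]
  constructor
  · rw [le_div_iff₀ ht]
    calc (n : ℝ) * t ≤ (n : ℝ) * (1 / n) := by
          exact mul_le_mul_of_nonneg_left h2 hn0.le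
      _ = 1 := by field_simp
  · rw [div_lt_iff₀ ht]
    have := (div_lt_iff₀ (by positivity : (0:ℝ) < (n:ℝ)+1)).mp h1
    push_cast
    linarith [mul_comm t ((n:ℝ)+1)]

lemma floor_eq_zero_of_one_lt {t : ℝ} (h : 1 < t) : ⌊1 / t⌋₊ = 0 := by
  rw [Nat.floor_eq_zero]
  rw [div_lt_one (lt_trans one_pos h)]
  exact h

lemma one_le_floor {t : ℝ} (h0 : 0 < t) (h1 : t ≤ 1) : 1 ≤ ⌊1 / t⌋₊ :=
  Nat.le_floor (by rw [le_div_iff₀ h0]; simpa using h1)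

lemma lt_one_div_floor_add_one {t : ℝ} (h0 : 0 < t) :
    1 / ((⌊1 / t⌋₊ : ℝ) + 1) < t := by
  have h := Nat.lt_floor_add_one (1 / t)
  rw [div_lt_iff₀ h0] at h
  rw [div_lt_iff₀ (by positivity)]
  linarith [mul_comm t ((⌊1/t⌋₊ : ℝ) + 1)]

lemma le_one_div_floor {t : ℝ} (h0 : 0 < t) (h1 : t ≤ 1) :
    t ≤ 1 / (⌊1 / t⌋₊ : ℝ) := by
  have hf : 1 ≤ ⌊1 / t⌋₊ := one_le_floor h0 h1
  have hf0 : (0:ℝ) < (⌊1 / t⌋₊ : ℝ) := by exact_mod_cast hf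
  have h := Nat.floor_le (le_of_lt (by positivity : (0:ℝ) < 1 / t))
  rw [le_div_iff₀ hf0]
  rw [le_div_iff₀ h0] at h
  linarith [mul_comm t (⌊1/t⌋₊ : ℝ)]

variable {E : Type*} [AddCommGroup E] [Module ℝ E]

/-- the curve (`k = 0`) and its candidate iterated derivatives -/
def DD (x : ℕ → E) (x₀ : E) (k : ℕ) (t : ℝ) : E :=
  if 0 < t then
    (if k = 0 then x (⌊1 / t⌋₊ + 1) else 0)
      + dsig k ⌊1 / t⌋₊ t • (x ⌊1 / t⌋₊ - x (⌊1 / t⌋₊ + 1))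
  else (if k = 0 then x₀ else 0)

/-- local branch of the curve -/
def BR (x : ℕ → E) (n k : ℕ) (s : ℝ) : E :=
  (if k = 0 then x (n + 1) else 0) + dsig k n s • (x n - x (n + 1))

lemma BR_flat {x : ℕ → E} {n k : ℕ} {s : ℝ} (h : 1 < aff n s) :
    BR x n k s = if k = 0 then x n else 0 := by
  unfold BR
  cases k with
  | zero => simp [sig_eq_one h.le]
  | succ m => simp [dsig_succ_eq_zero_of_gt h]

lemma BR_flat' {x : ℕ → E} {n k : ℕ} {s : ℝ} (h : aff n s < 0) :
    BR x n k s = if k = 0 then x (n + 1) else 0 := by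
  unfold BR
  cases k with
  | zero => simp [sig_eq_zero h.le]
  | succ m => simp [dsig_succ_eq_zero_of_neg h]

/-- Key local description: near any `t > 0`, `DD` agrees with the branch of `⌊1/t⌋₊`. -/
lemma DD_eventuallyEq (x : ℕ → E) (x₀ : E) {t : ℝ} (ht : 0 < t) (k : ℕ) :
    DD x x₀ k =ᶠ[𝓝 t] BR x ⌊1 / t⌋₊ k := by
  rcases lt_or_ge 1 t with h1 | h1
  · rw [floor_eq_zero_of_one_lt h1]
    filter_upwards [Ioi_mem_nhds h1] with s hs
    have hs0 : 0 < s := lt_trans one_pos hs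
    rw [DD, if_pos hs0, floor_eq_zero_of_one_lt hs]
    rfl
  · set n := ⌊1 / t⌋₊ with hn
    have hn1 : 1 ≤ n := one_le_floor ht h1
    have hlow : 1 / ((n : ℝ) + 1) < t := lt_one_div_floor_add_one ht
    have hhigh : t ≤ 1 / (n : ℝ) := le_one_div_floor ht h1
    rcases lt_or_eq_of_le hhigh with hlt | heq
    · filter_upwards [Ioo_mem_nhds hlow hlt] with s hs
      have hs0 : 0 < s := lt_trans (by positivity) hs.1
      rw [DD, if_pos hs0, floor_eq_of_mem hn1 hs.1 hs.2.le]
      rfl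
    · have haff1 : aff n t ∈ Ioi (1:ℝ) := by
        simp only [mem_Ioi]; rw [heq, aff_self n hn1]; norm_num
      have haff2 : aff (n - 1) t ∈ Iio (0:ℝ) := by
        simp only [mem_Iio]; rw [heq, aff_pred_self n hn1]; norm_num
      have hev1 : ∀ᶠ s in 𝓝 t, aff n s ∈ Ioi (1:ℝ) :=
        (aff_continuous n).continuousAt (Ioi_mem_nhds haff1)
      have hev2 : ∀ᶠ s in 𝓝 t, aff (n - 1) s ∈ Iio (0:ℝ) :=
        (aff_continuous (n - 1)).continuousAt (Iio_mem_nhds haff2)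
      have hev3 : ∀ᶠ s in 𝓝 t, 1 / ((n : ℝ) + 1) < s := eventually_gt_nhds hlow
      have hev4 : ∀ᶠ s in 𝓝 t, 0 < s := eventually_gt_nhds ht
      have hev5 : ∀ᶠ s in 𝓝 t, (1 / (n : ℝ) < s → ⌊1 / s⌋₊ = n - 1) := by
        rcases eq_or_lt_of_le hn1 with h1n | h2n
        · refine Eventually.of_forall fun s hs => ?_
          rw [← h1n] at hs ⊢
          norm_num at hs
          rw [floor_eq_zero_of_one_lt hs]
        · have hn1' : 1 ≤ n - 1 := by omega
          have hcast : ((n - 1 : ℕ) : ℝ) + 1 = (n : ℝ) := by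
            have : ((n - 1 : ℕ) : ℝ) = (n : ℝ) - 1 := by
              push_cast [Nat.cast_sub hn1]; ring
            rw [this]; ring
          have hn1pos : (0:ℝ) < ((n - 1 : ℕ) : ℝ) := by
            exact_mod_cast hn1'
          have htlt : t < 1 / ((n - 1 : ℕ) : ℝ) := by
            rw [heq]
            apply one_div_lt_one_div_of_lt hn1pos
            exact_mod_cast Nat.sub_lt (by omega) one_pos
          filter_upwards [eventually_lt_nhds htlt] with s hs hs'
          refine floor_eq_of_mem hn1' ?_ hs.le
          rw [hcast]
          exact hs'
      filter_upwards [hev1, hev2, hev3, hev4, hev5] with s h1s h2s h3s h4s h5s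
      rcases le_or_gt s (1 / (n : ℝ)) with hle | hlt
      · rw [DD, if_pos h4s, floor_eq_of_mem hn1 h3s hle]
        rfl
      · have e1 : DD x x₀ k s = BR x (n - 1) k s := by
          rw [DD, if_pos h4s, h5s hlt]
          rfl
        rw [e1, BR_flat' h2s, BR_flat h1s, Nat.sub_add_cancel hn1]

variable [TopologicalSpace E] [IsTopologicalAddGroup E] [ContinuousSMul ℝ E]

lemma BR_continuous (x : ℕ → E) (n k : ℕ) : Continuous (BR x n k) :=
  continuous_const.add ((dsig_continuous k n).smul continuous_const)

lemma tendsto_diffquot_smul {g : ℝ → ℝ} {g' : ℝ} {t : ℝ}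
    (hg : HasDerivAt g g' t) (v : E) :
    Tendsto (fun h : ℝ => h⁻¹ • (g (t + h) • v - g t • v)) (𝓝[≠] (0:ℝ))
      (𝓝 (g' • v)) := by
  have h1 : Tendsto (fun h : ℝ => h⁻¹ • (g (t + h) - g t)) (𝓝[≠] (0:ℝ)) (𝓝 g') :=
    hg.tendsto_slope_zero
  have h2 := h1.smul_const v
  refine h2.congr fun h => ?_
  rw [← sub_smul, smul_assoc]

lemma tendsto_diffquot_congr {f g : ℝ → E} {t : ℝ} {L : E}
    (hfg : f =ᶠ[𝓝 t] g)
    (h : Tendsto (fun h : ℝ => h⁻¹ • (g (t + h) - g t)) (𝓝[≠] (0:ℝ)) (𝓝 L)) :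
    Tendsto (fun h : ℝ => h⁻¹ • (f (t + h) - f t)) (𝓝[≠] (0:ℝ)) (𝓝 L) := by
  have htr : Tendsto (fun h : ℝ => t + h) (𝓝[≠] (0:ℝ)) (𝓝 t) := by
    have : Tendsto (fun h : ℝ => t + h) (𝓝 (0:ℝ)) (𝓝 t) := by
      simpa using (continuous_add_left t).tendsto (0:ℝ)
    exact this.mono_left nhdsWithin_le_nhds
  have hev : ∀ᶠ h in 𝓝[≠] (0:ℝ), f (t + h) = g (t + h) := htr.eventually hfg
  refine h.congr' ?_
  filter_upwards [hev] with h hh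
  rw [hh, hfg.self_of_nhds]

lemma DD_tendsto_pos (x : ℕ → E) (x₀ : E) {t : ℝ} (ht : 0 < t) (k : ℕ) :
    Tendsto (fun h : ℝ => h⁻¹ • (DD x x₀ k (t + h) - DD x x₀ k t)) (𝓝[≠] (0:ℝ))
      (𝓝 (DD x x₀ (k + 1) t)) := by
  set n := ⌊1 / t⌋₊
  have hD : DD x x₀ (k+1) t = dsig (k+1) n t • (x n - x (n+1)) := by
    have := (DD_eventuallyEq x x₀ ht (k+1)).self_of_nhds
    rw [this, BR, if_neg (Nat.succ_ne_zero k), zero_add]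
  rw [hD]
  refine tendsto_diffquot_congr (DD_eventuallyEq x x₀ ht k) ?_
  have h := tendsto_diffquot_smul (E := E) (dsig_hasDerivAt k n t) (x n - x (n+1))
  refine h.congr fun h => ?_
  unfold BR
  congr 1
  simp only [n]
  abel

lemma DD_eventually_const (x : ℕ → E) (x₀ : E) {t : ℝ} (ht : t < 0) (k : ℕ) :
    DD x x₀ k =ᶠ[𝓝 t] fun _ => (if k = 0 then x₀ else 0) := by
  filter_upwards [Iio_mem_nhds ht] with s hs
  rw [DD, if_neg (by simp only [mem_Iio] at hs; linarith)]

lemma DD_tendsto_neg (x : ℕ → E) (x₀ : E) {t : ℝ} (ht : t < 0) (k : ℕ) :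
    Tendsto (fun h : ℝ => h⁻¹ • (DD x x₀ k (t + h) - DD x x₀ k t)) (𝓝[≠] (0:ℝ))
      (𝓝 (DD x x₀ (k + 1) t)) := by
  have hD : DD x x₀ (k+1) t = 0 := by
    rw [DD, if_neg (by linarith), if_neg (Nat.succ_ne_zero k)]
  rw [hD]
  refine tendsto_diffquot_congr (DD_eventually_const x x₀ ht k) ?_
  simpa using tendsto_const_nhds (x := (0:E)) (f := 𝓝[≠] (0:ℝ))

lemma DD_continuousAt_ne (x : ℕ → E) (x₀ : E) {t : ℝ} (ht : t ≠ 0) (k : ℕ) :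
    ContinuousAt (DD x x₀ k) t := by
  rcases ht.lt_or_gt with h | h
  · exact ContinuousAt.congr continuousAt_const (DD_eventually_const x x₀ h k).symm
  · exact ContinuousAt.congr (BR_continuous x _ k).continuousAt
      (DD_eventuallyEq x x₀ h k).symm

lemma aux_bound (k : ℕ) {M ν a : ℝ} (hM : 0 ≤ M) (hν : 1 ≤ ν)
    (ha : |a| ≤ (ν + 1) * ((M + 1) * (3 * ν * (ν + 1)) ^ k)) :
    |a / ν ^ (2 * k + 2)| ≤ 2 * (M + 1) * 6 ^ k / ν := by
  have hν0 : (0:ℝ) < ν := lt_of_lt_of_le one_pos hν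
  have hpow : (3 * ν * (ν + 1)) ^ k ≤ 6 ^ k * ν ^ (2 * k) := by
    rw [pow_mul, ← mul_pow]
    apply pow_le_pow_left₀ (by positivity)
    nlinarith
  rw [abs_div, abs_of_nonneg (pow_nonneg hν0.le _),
    div_le_div_iff₀ (by positivity) hν0]
  calc |a| * ν ≤ ((ν + 1) * ((M + 1) * (3 * ν * (ν + 1)) ^ k)) * ν :=
        mul_le_mul_of_nonneg_right ha hν0.le
    _ ≤ ((2 * ν) * ((M + 1) * (6 ^ k * ν ^ (2 * k)))) * ν := by
        apply mul_le_mul_of_nonneg_right _ hν0.le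
        apply mul_le_mul (by linarith)
          (mul_le_mul_of_nonneg_left hpow (by positivity)) (by positivity) (by positivity)
    _ = 2 * (M + 1) * 6 ^ k * ν ^ (2 * k + 2) := by ring

lemma DD_tendsto_zero_right (x : ℕ → E) (x₀ : E)
    (hfast : ∀ k : ℕ,
      Bornology.IsVonNBounded ℝ {y : E | ∃ n : ℕ, y = (n : ℝ) ^ k • (x n - x₀)})
    (k : ℕ) :
    Tendsto (fun t : ℝ => t⁻¹ • (DD x x₀ k t - DD x x₀ k 0)) (𝓝[>] (0:ℝ)) (𝓝 0) := by
  obtain ⟨M, hM0, hM⟩ := dsig_bound k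
  set j := 2 * k + 2 with hj
  set K := 2 * (M + 1) * 6 ^ k with hK
  have hK0 : 0 ≤ K := by positivity
  set δ := (if k = 0 then (1:ℝ) else 0) with hδ
  have hδ1 : |δ| ≤ 1 := by rw [hδ]; split <;> norm_num
  set P := fun t : ℝ => (t⁻¹ * dsig k ⌊1/t⌋₊ t) / ((⌊1/t⌋₊ : ℝ)) ^ j with hP
  set Q := fun t : ℝ => (t⁻¹ * (δ - dsig k ⌊1/t⌋₊ t)) / ((⌊1/t⌋₊ : ℝ) + 1) ^ j with hQ
  set b₁ := fun t : ℝ => ((⌊1/t⌋₊ : ℝ)) ^ j • (x ⌊1/t⌋₊ - x₀) with hb₁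
  set b₂ := fun t : ℝ => ((⌊1/t⌋₊ : ℝ) + 1) ^ j • (x (⌊1/t⌋₊ + 1) - x₀) with hb₂
  have hmem : Ioc (0:ℝ) 1 ∈ 𝓝[>] (0:ℝ) :=
    Ioc_mem_nhdsGT_of_mem ⟨le_refl 0, zero_lt_one⟩
  have hbasic : ∀ t ∈ Ioc (0:ℝ) 1,
      1 ≤ ⌊1/t⌋₊ ∧ t⁻¹ ≤ (⌊1/t⌋₊ : ℝ) + 1 := by
    intro t ht
    have h1 : 1 ≤ ⌊1/t⌋₊ := one_le_floor ht.1 ht.2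
    refine ⟨h1, ?_⟩
    have h2 := lt_one_div_floor_add_one ht.1
    rw [div_lt_iff₀ (by positivity)] at h2
    rw [← one_div t, div_le_iff₀ ht.1]
    linarith [mul_comm t ((⌊1/t⌋₊ : ℝ) + 1)]
  have hid : ∀ t ∈ Ioc (0:ℝ) 1,
      t⁻¹ • (DD x x₀ k t - DD x x₀ k 0) = P t • b₁ t + Q t • b₂ t := by
    intro t ht
    obtain ⟨h1, -⟩ := hbasic t ht
    set n := ⌊1/t⌋₊ with hn
    have hν : (1:ℝ) ≤ (n:ℝ) := by exact_mod_cast h1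
    have hne1 : ((n:ℝ)) ^ j ≠ 0 := by positivity
    have hne2 : ((n:ℝ) + 1) ^ j ≠ 0 := by positivity
    have e1 : P t • b₁ t = (t⁻¹ * dsig k n t) • (x n - x₀) := by
      rw [hP, hb₁, smul_smul, div_mul_cancel₀ _ hne1]
    have e2 : Q t • b₂ t = (t⁻¹ * (δ - dsig k n t)) • (x (n+1) - x₀) := by
      rw [hQ, hb₂, smul_smul, div_mul_cancel₀ _ hne2]
    have e3 : DD x x₀ k t - DD x x₀ k 0
        = δ • (x (n+1) - x₀) + dsig k n t • (x n - x (n+1)) := by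
      rw [DD, DD, if_pos ht.1, if_neg (lt_irrefl 0), ← hn]
      rcases Nat.eq_zero_or_pos k with hk | hk
      · subst hk; simp [hδ]; abel
      · rw [if_neg (by omega), if_neg (by omega), hδ, if_neg (by omega)]
        simp
    rw [e1, e2, e3]
    module
  have hPbd : ∀ t ∈ Ioc (0:ℝ) 1, |P t| ≤ K / (⌊1/t⌋₊ : ℝ) := by
    intro t ht
    obtain ⟨h1, h2⟩ := hbasic t ht
    set n := ⌊1/t⌋₊ with hn
    have hν : (1:ℝ) ≤ (n:ℝ) := by exact_mod_cast h1
    refine aux_bound k hM0 hν ?_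
    have htinv : |t⁻¹| ≤ (n:ℝ) + 1 := by
      rw [abs_of_nonneg (inv_nonneg.mpr ht.1.le)]; exact h2
    calc |t⁻¹ * dsig k n t| = |t⁻¹| * |dsig k n t| := abs_mul _ _
      _ ≤ ((n:ℝ) + 1) * (M * (3 * n * (n + 1)) ^ k) :=
          mul_le_mul htinv (hM n t) (abs_nonneg _) (by positivity)
      _ ≤ ((n:ℝ) + 1) * ((M + 1) * (3 * n * (n + 1)) ^ k) := by
          apply mul_le_mul_of_nonneg_left _ (by positivity)
          apply mul_le_mul_of_nonneg_right (by linarith) (by positivity)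
  have hQbd : ∀ t ∈ Ioc (0:ℝ) 1, |Q t| ≤ K / (⌊1/t⌋₊ : ℝ) := by
    intro t ht
    obtain ⟨h1, h2⟩ := hbasic t ht
    set n := ⌊1/t⌋₊ with hn
    have hν : (1:ℝ) ≤ (n:ℝ) := by exact_mod_cast h1
    have hν' : (1:ℝ) ≤ (n:ℝ) + 1 := by linarith
    have hbd : |Q t| ≤ K / ((n:ℝ) + 1) := by
      refine aux_bound k hM0 hν' ?_
      have htinv : |t⁻¹| ≤ ((n:ℝ) + 1) + 1 := by
        rw [abs_of_nonneg (inv_nonneg.mpr ht.1.le)]; linarith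
      have hnum : |δ - dsig k n t| ≤ (M + 1) * (3 * ((n:ℝ)+1) * (((n:ℝ)+1) + 1)) ^ k := by
        have hX : (3 * (n:ℝ) * ((n:ℝ) + 1)) ^ k ≤ (3 * ((n:ℝ)+1) * (((n:ℝ)+1) + 1)) ^ k := by
          apply pow_le_pow_left₀ (by positivity)
          nlinarith
        have h1X : (1:ℝ) ≤ (3 * ((n:ℝ)+1) * (((n:ℝ)+1) + 1)) ^ k :=
          one_le_pow₀ (by nlinarith)
        calc |δ - dsig k n t| ≤ |δ| + |dsig k n t| := abs_sub _ _
          _ ≤ 1 + M * (3 * n * (n + 1)) ^ k := add_le_add hδ1 (hM n t)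
          _ ≤ (M + 1) * (3 * ((n:ℝ)+1) * (((n:ℝ)+1) + 1)) ^ k := by
              have h2X := mul_le_mul_of_nonneg_left hX hM0
              nlinarith [h1X, h2X]
      calc |t⁻¹ * (δ - dsig k n t)| = |t⁻¹| * |δ - dsig k n t| := abs_mul _ _
        _ ≤ (((n:ℝ) + 1) + 1) * ((M + 1) * (3 * ((n:ℝ)+1) * (((n:ℝ)+1) + 1)) ^ k) :=
            mul_le_mul htinv hnum (abs_nonneg _) (by positivity)
    refine le_trans hbd ?_
    have hνpos : (0:ℝ) < (n:ℝ) := by linarith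
    exact div_le_div_of_nonneg_left hK0 hνpos (by linarith)
  have hNto : Tendsto (fun t : ℝ => ⌊1/t⌋₊) (𝓝[>] (0:ℝ)) atTop := by
    apply tendsto_nat_floor_atTop.comp
    exact tendsto_inv_nhdsGT_zero.congr (fun t => (one_div t).symm)
  have hKto : Tendsto (fun t : ℝ => K / (⌊1/t⌋₊ : ℝ)) (𝓝[>] (0:ℝ)) (𝓝 0) :=
    (tendsto_const_div_atTop_nhds_zero_nat K).comp hNto
  have hPto : Tendsto P (𝓝[>] (0:ℝ)) (𝓝 0) := by
    refine squeeze_zero_norm' ?_ hKto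
    filter_upwards [hmem] with t ht
    simpa [Real.norm_eq_abs] using hPbd t ht
  have hQto : Tendsto Q (𝓝[>] (0:ℝ)) (𝓝 0) := by
    refine squeeze_zero_norm' ?_ hKto
    filter_upwards [hmem] with t ht
    simpa [Real.norm_eq_abs] using hQbd t ht
  have hb₁mem : ∀ t : ℝ, b₁ t ∈ {y : E | ∃ n : ℕ, y = (n : ℝ) ^ j • (x n - x₀)} :=
    fun t => ⟨⌊1/t⌋₊, rfl⟩
  have hb₂mem : ∀ t : ℝ, b₂ t ∈ {y : E | ∃ n : ℕ, y = (n : ℝ) ^ j • (x n - x₀)} := by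
    intro t
    refine ⟨⌊1/t⌋₊ + 1, ?_⟩
    rw [hb₂]
    push_cast
    ring_nf
  have h1 : Tendsto (fun t => P t • b₁ t) (𝓝[>] (0:ℝ)) (𝓝 0) :=
    (hfast j).smul_tendsto_zero (Eventually.of_forall hb₁mem) hPto
  have h2 : Tendsto (fun t => Q t • b₂ t) (𝓝[>] (0:ℝ)) (𝓝 0) :=
    (hfast j).smul_tendsto_zero (Eventually.of_forall hb₂mem) hQto
  have hsum : Tendsto (fun t => P t • b₁ t + Q t • b₂ t) (𝓝[>] (0:ℝ)) (𝓝 0) := by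
    simpa using h1.add h2
  refine hsum.congr' ?_
  filter_upwards [hmem] with t ht
  exact (hid t ht).symm

lemma DD_apply_nonpos (x : ℕ → E) (x₀ : E) (k : ℕ) {t : ℝ} (ht : t ≤ 0) :
    DD x x₀ k t = if k = 0 then x₀ else 0 := by
  rw [DD, if_neg (not_lt.mpr ht)]

/-- right continuity at `0`, derived from the difference-quotient limit -/
lemma DD_tendsto_nhds_zero_right (x : ℕ → E) (x₀ : E)
    (hfast : ∀ k : ℕ,
      Bornology.IsVonNBounded ℝ {y : E | ∃ n : ℕ, y = (n : ℝ) ^ k • (x n - x₀)})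
    (k : ℕ) :
    Tendsto (DD x x₀ k) (𝓝[>] (0:ℝ)) (𝓝 (DD x x₀ k 0)) := by
  have hq := DD_tendsto_zero_right x x₀ hfast k
  have hidt : Tendsto (fun t : ℝ => t) (𝓝[>] (0:ℝ)) (𝓝 0) :=
    tendsto_id.mono_left nhdsWithin_le_nhds
  have h0 : Tendsto (fun t : ℝ => t • (t⁻¹ • (DD x x₀ k t - DD x x₀ k 0)))
      (𝓝[>] (0:ℝ)) (𝓝 ((0:ℝ) • (0:E))) := hidt.smul hq
  rw [zero_smul] at h0
  have h1 : Tendsto (fun t : ℝ => DD x x₀ k t - DD x x₀ k 0) (𝓝[>] (0:ℝ)) (𝓝 0) := by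
    refine h0.congr' ?_
    filter_upwards [self_mem_nhdsWithin] with t ht
    have ht0 : t ≠ 0 := ne_of_gt ht
    rw [smul_inv_smul₀ ht0]
  have h2 := tendsto_const_nhds (x := DD x x₀ k 0) (f := 𝓝[>] (0:ℝ))
  have := h2.add h1
  rw [add_zero] at this
  refine this.congr fun t => ?_
  abel

lemma DD_continuousAt_zero (x : ℕ → E) (x₀ : E)
    (hfast : ∀ k : ℕ,
      Bornology.IsVonNBounded ℝ {y : E | ∃ n : ℕ, y = (n : ℝ) ^ k • (x n - x₀)})
    (k : ℕ) :
    ContinuousAt (DD x x₀ k) 0 := by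
  rw [ContinuousAt, ← nhdsLE_sup_nhdsGT (0:ℝ), tendsto_sup]
  constructor
  · refine tendsto_const_nhds.congr' ?_
    filter_upwards [self_mem_nhdsWithin] with s hs
    rw [DD_apply_nonpos x x₀ k hs, DD_apply_nonpos x x₀ k le_rfl]
  · exact DD_tendsto_nhds_zero_right x x₀ hfast k

lemma DD_tendsto_zero (x : ℕ → E) (x₀ : E)
    (hfast : ∀ k : ℕ,
      Bornology.IsVonNBounded ℝ {y : E | ∃ n : ℕ, y = (n : ℝ) ^ k • (x n - x₀)})
    (k : ℕ) :
    Tendsto (fun h : ℝ => h⁻¹ • (DD x x₀ k (0 + h) - DD x x₀ k 0)) (𝓝[≠] (0:ℝ))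
      (𝓝 (DD x x₀ (k + 1) 0)) := by
  have hD : DD x x₀ (k+1) 0 = 0 := by
    rw [DD_apply_nonpos x x₀ (k+1) le_rfl, if_neg (Nat.succ_ne_zero k)]
  rw [hD, ← nhdsLT_sup_nhdsGT (0:ℝ), tendsto_sup]
  constructor
  · refine tendsto_const_nhds.congr' ?_
    filter_upwards [self_mem_nhdsWithin] with h hh
    simp only [mem_Iio] at hh
    rw [zero_add, DD_apply_nonpos x x₀ k hh.le, DD_apply_nonpos x x₀ k le_rfl]
    simp
  · have := DD_tendsto_zero_right x x₀ hfast k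
    refine this.congr fun h => ?_
    rw [zero_add]

end SpecialCurveAux

/- STATEMENT 1 (Special curve lemma): if (x_n) converges fast to x in a
locally convex space E (i.e. {n^k (x_n - x) : n} is bounded for every k),
then there is a smooth curve c : ℝ → E with c(1/n) = x_n and c(0) = x.
Smoothness of a curve in a general locally convex space is expressed by the
existence of continuous iterated derivatives D k (with D 0 = c and D (k+1)
the limit of difference quotients of D k). -/
theorem special_curve_lemma
    {E : Type*} [AddCommGroup E] [Module ℝ E] [TopologicalSpace E]
    [IsTopologicalAddGroup E] [ContinuousSMul ℝ E] [LocallyConvexSpace ℝ E]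
    (x : ℕ → E) (x₀ : E)
    (hfast : ∀ k : ℕ,
      Bornology.IsVonNBounded ℝ {y : E | ∃ n : ℕ, y = (n : ℝ) ^ k • (x n - x₀)}) :
    ∃ (c : ℝ → E) (D : ℕ → ℝ → E),
      D 0 = c ∧
      (∀ k, Continuous (D k)) ∧
      (∀ k t, Filter.Tendsto (fun h : ℝ => h⁻¹ • (D k (t + h) - D k t))
        (nhdsWithin 0 {0}ᶜ) (nhds (D (k + 1) t))) ∧
      c 0 = x₀ ∧ (∀ n : ℕ, 1 ≤ n → c (1 / (n : ℝ)) = x n) := by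
  classical
  refine ⟨SpecialCurveAux.DD x x₀ 0, SpecialCurveAux.DD x x₀, rfl, ?_, ?_, ?_, ?_⟩
  · intro k
    rw [continuous_iff_continuousAt]
    intro t
    rcases eq_or_ne t 0 with rfl | ht
    · exact SpecialCurveAux.DD_continuousAt_zero x x₀ hfast k
    · exact SpecialCurveAux.DD_continuousAt_ne x x₀ ht k
  · intro k t
    rcases lt_trichotomy t 0 with h | rfl | h
    · exact SpecialCurveAux.DD_tendsto_neg x x₀ h k
    · exact SpecialCurveAux.DD_tendsto_zero x x₀ hfast k
    · exact SpecialCurveAux.DD_tendsto_pos x x₀ h k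
  · rw [SpecialCurveAux.DD_apply_nonpos x x₀ 0 le_rfl, if_pos rfl]
  · intro n hn
    have hn0 : (0:ℝ) < (n:ℝ) := by exact_mod_cast hn
    have ht : 0 < 1 / (n:ℝ) := by positivity
    have hfl : ⌊1 / (1 / (n:ℝ))⌋₊ = n := by
      rw [one_div_one_div, Nat.floor_natCast]
    rw [SpecialCurveAux.DD, if_pos ht, hfl]
    have hsig : SpecialCurveAux.dsig 0 n (1 / (n:ℝ)) = 1 :=
      SpecialCurveAux.sig_eq_one (by rw [SpecialCurveAux.aff_self n hn]; norm_num)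
    rw [if_pos rfl, hsig, one_smul]
    abel
end
end

section
/- Let H be an infinite-dimensional real Hilbert space and α : L(H,H) → ℝ a continuous linear functional vanishing on the subspace of compact operators. Then the map D : C²-functions on H → ℝ given by D(f) = α(d²f(0)) is a derivation at 0, i.e., D(f·g) = f(0)·D(g) + g(0)·D(f) for all twice continuously differentiable f, g : H → ℝ. -/
open InnerProductSpace

/-- The bounded operator on a real Hilbert space associated (via the inner
product) to the second derivative bilinear form of `f` at `0`. -/
noncomputable def secondDerivOperator
    {H : Type*} [NormedAddCommGroup H] [InnerProductSpace ℝ H] [CompleteSpace H]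
    (f : H → ℝ) : H →L[ℝ] H :=
  ((InnerProductSpace.toDual ℝ H).symm.toContinuousLinearEquiv.toContinuousLinearMap).comp
    (fderiv ℝ (fderiv ℝ f) 0)

/-- A rank-one operator `v ↦ φ v • w` is a compact operator. -/
lemma isCompactOperator_smulRight
    {H : Type*} [NormedAddCommGroup H] [NormedSpace ℝ H]
    (φ : H →L[ℝ] ℝ) (w : H) : IsCompactOperator (φ.smulRight w) := by
  refine ⟨(fun t : ℝ => t • w) '' Set.Icc (-1) 1,
    (isCompact_Icc.image (by continuity)), ?_⟩
  have h0 : Set.Icc (-1 : ℝ) 1 ∈ nhds (φ 0) := by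
    rw [map_zero]
    exact Icc_mem_nhds (by norm_num) (by norm_num)
  filter_upwards [φ.continuous.continuousAt.preimage_mem_nhds h0] with v hv
  exact ⟨φ v, hv, rfl⟩

theorem derivation_from_functional_vanishing_on_compacts
    {H : Type*} [NormedAddCommGroup H] [InnerProductSpace ℝ H] [CompleteSpace H]
    (hinf : ¬ FiniteDimensional ℝ H)
    (α : (H →L[ℝ] H) →L[ℝ] ℝ)
    (hα : ∀ T : H →L[ℝ] H, IsCompactOperator T → α T = 0)
    (f g : H → ℝ) (hf : ContDiff ℝ 2 f) (hg : ContDiff ℝ 2 g) :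
    α (secondDerivOperator (fun x => f x * g x)) =
      f 0 * α (secondDerivOperator g) + g 0 * α (secondDerivOperator f) := by
  set J := ((InnerProductSpace.toDual ℝ H).symm.toContinuousLinearEquiv.toContinuousLinearMap)
    with hJ
  have hf' : Differentiable ℝ f := hf.differentiable (by norm_num)
  have hg' : Differentiable ℝ g := hg.differentiable (by norm_num)
  have hF : Differentiable ℝ (fderiv ℝ f) :=
    (hf.fderiv_right (m := 1) (by norm_num)).differentiable (by norm_num)
  have hG : Differentiable ℝ (fderiv ℝ g) :=
    (hg.fderiv_right (m := 1) (by norm_num)).differentiable (by norm_num)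
  have h1 : fderiv ℝ (fun x => f x * g x) =
      fun x => f x • fderiv ℝ g x + g x • fderiv ℝ f x := by
    funext x
    exact fderiv_mul (hf'.differentiableAt) (hg'.differentiableAt)
  have h2 : fderiv ℝ (fderiv ℝ (fun x => f x * g x)) 0 =
      (f 0 • fderiv ℝ (fderiv ℝ g) 0 + (fderiv ℝ f 0).smulRight (fderiv ℝ g 0)) +
      (g 0 • fderiv ℝ (fderiv ℝ f) 0 + (fderiv ℝ g 0).smulRight (fderiv ℝ f 0)) := by
    rw [h1]
    rw [fderiv_fun_add (f := fun y => f y • fderiv ℝ g y) (g := fun y => g y • fderiv ℝ f y) ((hf'.differentiableAt).smul (hG.differentiableAt))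
      ((hg'.differentiableAt).smul (hF.differentiableAt)),
      fderiv_fun_smul (hf'.differentiableAt) (hG.differentiableAt),
      fderiv_fun_smul (hg'.differentiableAt) (hF.differentiableAt)]
  have hcomp : ∀ (φ ψ : H →L[ℝ] ℝ), J.comp (φ.smulRight ψ) = φ.smulRight (J ψ) := by
    intro φ ψ
    ext v
    simp
    rfl
  have h3 : secondDerivOperator (fun x => f x * g x) =
      (f 0 • secondDerivOperator g + (fderiv ℝ f 0).smulRight (J (fderiv ℝ g 0))) +
      (g 0 • secondDerivOperator f + (fderiv ℝ g 0).smulRight (J (fderiv ℝ f 0))) := by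
    rw [secondDerivOperator, h2, ← hJ]
    rw [ContinuousLinearMap.comp_add, ContinuousLinearMap.comp_add,
      ContinuousLinearMap.comp_add, hcomp, hcomp]
    congr 2 <;> · ext v; simp [secondDerivOperator, hJ]
  rw [h3]
  rw [map_add, map_add, map_add, map_smul, map_smul,
    hα _ (isCompactOperator_smulRight _ _), hα _ (isCompactOperator_smulRight _ _)]
  simp
end

section
/- With the same setup, the numerator of sectional curvature for X, Y ∈ 𝔤 satisfies γ(ℛ(X,Y)X, Y) = γ(ρ_X X, ρ_Y Y) - ‖ρ_X Y‖²_γ + (3/4)‖[X,Y]‖²_γ - γ(ρ_X Y, [X,Y]) + γ(Y, [X,[X,Y]]). -/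
/-!
Since `ρ_X Y - ρ_Y X` is `γ`-orthogonal to everything, `ρ` is symmetric once `γ` is
nondegenerate. Expanding `ℛ(X,Y)X` and pairing with `Y`, every term is then a `γ`-pairing of
`ρ_X ρ_X Y`, `ρ_Y ρ_X X`, `ρ_X [X,Y]` or a bracket against `Y`, and the defining identity of `ρ`
turns these into the right-hand side through two consequences of it:
`γ(ρ_η w, η) = -½ γ(ρ_η η, w)` and `γ(ρ_ξ w, η) + γ(ρ_ξ η, w) = ½ (γ(w, [ξ,η]) + γ(η, [ξ,w]))`.
-/

/-- `ρ ξ η = ½ γ̌⁻¹ (ad_ξ^* γ̌ η + ad_η^* γ̌ ξ)`, tested against every `ζ`. -/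
def IsSymmetrizedTranspose {K L : Type*} [Field K] [LieRing L] [LieAlgebra K L]
    (γ : L →ₗ[K] L →ₗ[K] K) (ρ : L → Module.End K L) : Prop :=
  ∀ ξ η ζ : L, γ (ρ ξ η) ζ = (1 / 2) * γ η ⁅ξ, ζ⁆ + (1 / 2) * γ ξ ⁅η, ζ⁆

namespace IsSymmetrizedTranspose

variable {K L : Type*} [Field K] [LieRing L] [LieAlgebra K L]
  {γ : L →ₗ[K] L →ₗ[K] K} {ρ : L → Module.End K L}

theorem comm (hρ : IsSymmetrizedTranspose γ ρ) (hγ : γ.SeparatingLeft) (ξ η : L) :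
    ρ ξ η = ρ η ξ :=
  sub_eq_zero.mp <| hγ _ fun ζ => by rw [map_sub, LinearMap.sub_apply, hρ, hρ]; ring

theorem form_apply_diag [CharZero K] (hρ : IsSymmetrizedTranspose γ ρ) (η ζ : L) :
    γ (ρ η η) ζ = γ η ⁅η, ζ⁆ := by
  rw [hρ]; ring

theorem form_apply_self_right [CharZero K] (hρ : IsSymmetrizedTranspose γ ρ) (η w : L) :
    γ (ρ η w) η = -(1 / 2) * γ (ρ η η) w := by
  rw [hρ, form_apply_diag hρ, lie_self, map_zero, ← lie_skew, map_neg]; ring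

theorem form_apply_add_form_apply_swap (hρ : IsSymmetrizedTranspose γ ρ) (ξ η w : L) :
    γ (ρ ξ w) η + γ (ρ ξ η) w = (1 / 2) * (γ w ⁅ξ, η⁆ + γ η ⁅ξ, w⁆) := by
  rw [hρ, hρ, ← lie_skew w η, map_neg]; ring

end IsSymmetrizedTranspose

theorem sectional_curvature_numerator_formula_general
    {L : Type*} [LieRing L] [LieAlgebra ℝ L]
    (γ : L →ₗ[ℝ] L →ₗ[ℝ] ℝ)
    (hsymm : ∀ x y : L, γ x y = γ y x)
    (hpos : ∀ x : L, x ≠ 0 → 0 < γ x x)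
    (ρ : L → Module.End ℝ L)
    (hρ : ∀ ξ η ζ : L,
      γ (ρ ξ η) ζ = (1 / 2) * γ η ⁅ξ, ζ⁆ + (1 / 2) * γ ξ ⁅η, ζ⁆)
    (X Y : L) :
    γ ((⁅ρ X, ρ Y⁆ + ρ ⁅X, Y⁆
        - (1 / 2 : ℝ) • ⁅ρ X, LieAlgebra.ad ℝ L Y⁆
        + (1 / 2 : ℝ) • ⁅ρ Y, LieAlgebra.ad ℝ L X⁆
        - (1 / 4 : ℝ) • LieAlgebra.ad ℝ L ⁅X, Y⁆) X) Y
    =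
    γ (ρ X X) (ρ Y Y) - γ (ρ X Y) (ρ X Y)
      + (3 / 4) * γ ⁅X, Y⁆ ⁅X, Y⁆
      - γ (ρ X Y) ⁅X, Y⁆
      + γ Y ⁅X, ⁅X, Y⁆⁆ := by
  have hT : IsSymmetrizedTranspose γ ρ := hρ
  have hγ : γ.SeparatingLeft := fun x hx => by_contra fun h => (hpos x h).ne' (hx x)
  simp only [LinearMap.sub_apply, LinearMap.add_apply, LinearMap.smul_apply,
    Ring.lie_def, Module.End.mul_apply, LieAlgebra.ad_apply, lie_self, map_zero,
    map_add, map_sub, map_smul, smul_eq_mul, hT.comm hγ Y X, hT.comm hγ ⁅X, Y⁆ X,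
    ← lie_skew Y X, ← lie_skew ⁅X, Y⁆ X, map_neg, LinearMap.neg_apply, LinearMap.zero_apply]
  linear_combination hT.form_apply_add_form_apply_swap X Y (ρ X Y)
    + (3 / 2) * hT.form_apply_add_form_apply_swap X Y ⁅X, Y⁆
    - hT.form_apply_self_right Y (ρ X X) - (1 / 2) * hT.form_apply_diag Y (ρ X X)
    + (1 / 2) * hsymm ⁅Y, ρ X X⁆ Y - (1 / 2) * hsymm ⁅X, ρ X Y⁆ Y
    + (1 / 4) * hsymm ⁅X, ⁅X, Y⁆⁆ Y - hsymm (ρ X X) (ρ Y Y)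

theorem sectional_curvature_numerator_formula
    {L : Type*} [LieRing L] [LieAlgebra ℝ L] [Module.Finite ℝ L]
    (γ : L →ₗ[ℝ] L →ₗ[ℝ] ℝ)
    (hsymm : ∀ x y : L, γ x y = γ y x)
    (hpos : ∀ x : L, x ≠ 0 → 0 < γ x x)
    (ρ : L → Module.End ℝ L)
    (hρ : ∀ ξ η ζ : L,
      γ (ρ ξ η) ζ = (1 / 2) * γ η ⁅ξ, ζ⁆ + (1 / 2) * γ ξ ⁅η, ζ⁆)
    (X Y : L) :
    γ ((⁅ρ X, ρ Y⁆ + ρ ⁅X, Y⁆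
        - (1 / 2 : ℝ) • ⁅ρ X, LieAlgebra.ad ℝ L Y⁆
        + (1 / 2 : ℝ) • ⁅ρ Y, LieAlgebra.ad ℝ L X⁆
        - (1 / 4 : ℝ) • LieAlgebra.ad ℝ L ⁅X, Y⁆) X) Y
    =
    γ (ρ X X) (ρ Y Y) - γ (ρ X Y) (ρ X Y)
      + (3 / 4) * γ ⁅X, Y⁆ ⁅X, Y⁆
      - γ (ρ X Y) ⁅X, Y⁆
      + γ Y ⁅X, ⁅X, Y⁆⁆ :=
  sectional_curvature_numerator_formula_general γ hsymm hpos ρ hρ X Y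
end

section
/- Mario's formula: on a finite-dimensional Riemannian manifold (M,g) with closed 1-forms α, β, the numerator of sectional curvature satisfies g(R(α♯,β♯)α♯,β♯) = -(1/2)α♯α♯(‖β‖²_{g⁻¹}) - (1/2)β♯β♯(‖α‖²_{g⁻¹}) + (1/2)(α♯β♯ + β♯α♯)(g⁻¹(α,β)) - (1/4)‖d(g⁻¹(α,β))‖²_{g⁻¹} + (1/4)g⁻¹(d(‖α‖²_{g⁻¹}), d(‖β‖²_{g⁻¹})) + (3/4)‖[α♯,β♯]‖²_g. -/
/-- Coordinate model of a d-dimensional manifold chart. -/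
abbrev Vec (d : ℕ) := Fin d → ℝ

/-- The Riemann curvature tensor in a chart, in terms of the Christoffel
symbols Γ: R(u,v)z = D_uΓ(·,v,z) - D_vΓ(·,u,z) + Γ(u,Γ(v,z)) - Γ(v,Γ(u,z))
(evaluated on constant coordinate vector fields, whose Lie bracket is 0). -/
noncomputable def riemCurv {d : ℕ} (Γ : Vec d → Vec d → Vec d → Vec d)
    (x u v z : Vec d) : Vec d :=
  fderiv ℝ (fun y => Γ y v z) x u - fderiv ℝ (fun y => Γ y u z) x v
    + Γ x u (Γ x v z) - Γ x v (Γ x u z)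


section Aux
variable {E F G H : Type*} [NormedAddCommGroup E] [NormedSpace ℝ E]
  [NormedAddCommGroup F] [NormedSpace ℝ F] [NormedAddCommGroup G] [NormedSpace ℝ G]
  [NormedAddCommGroup H] [NormedSpace ℝ H]

theorem fdc1 {f : E → F →L[ℝ] G} {x : E} (hf : DifferentiableAt ℝ f x) (p : F) (w : E) :
    fderiv ℝ (fun y => f y p) x w = fderiv ℝ f x w p := by
  rw [fderiv_clm_apply hf (differentiableAt_const p)]
  simp

theorem fdc2 {f : E → F →L[ℝ] G →L[ℝ] H} {x : E} (hf : DifferentiableAt ℝ f x) (p : F) (q : G)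
    (w : E) : fderiv ℝ (fun y => f y p q) x w = fderiv ℝ f x w p q := by
  rw [show (fun y => f y p q) = fun y => (fun z => f z p) y q from rfl,
    fdc1 (hf.clm_apply (differentiableAt_const p)) q w, fdc1 hf p w]

theorem fdc3 {B : E → F →L[ℝ] G →L[ℝ] H} {x : E} (hB : DifferentiableAt ℝ (fderiv ℝ B) x)
    (u : E) (p : F) (q : G) (w : E) :
    fderiv ℝ (fun y => fderiv ℝ B y u p q) x w = fderiv ℝ (fderiv ℝ B) x w u p q := by
  have h1 : DifferentiableAt ℝ (fun z => fderiv ℝ B z u) x :=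
    hB.clm_apply (c := fderiv ℝ B) (differentiableAt_const u)
  rw [show (fun y => fderiv ℝ B y u p q) = fun y => (fun z => fderiv ℝ B z u) y p q from rfl,
    fdc2 h1 p q w, fdc1 (f := fderiv ℝ B) hB u w]

theorem schwarz {f : E → F} (hf : ContDiff ℝ (⊤ : ℕ∞) f) (x v w : E) :
    fderiv ℝ (fderiv ℝ f) x v w = fderiv ℝ (fderiv ℝ f) x w v :=
  second_derivative_symmetric (fun y => (hf.differentiable (show ((⊤ : ℕ∞) : WithTop ℕ∞) ≠ 0 by simp) y).hasFDerivAt)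
    (((hf.fderiv_right (by simp)).differentiable (show ((⊤ : ℕ∞) : WithTop ℕ∞) ≠ 0 by simp) x).hasFDerivAt) v w

theorem fderiv_bil {B : E → F →L[ℝ] G →L[ℝ] H} {V : E → F} {W : E → G} {x : E}
    (hB : DifferentiableAt ℝ B x) (hV : DifferentiableAt ℝ V x) (hW : DifferentiableAt ℝ W x)
    (w : E) :
    fderiv ℝ (fun y => B y (V y) (W y)) x w
      = fderiv ℝ B x w (V x) (W x) + B x (fderiv ℝ V x w) (W x) + B x (V x) (fderiv ℝ W x w) := by
  rw [show (fun y => B y (V y) (W y)) = fun y => ((fun z => B z (V z)) y) (W y) from rfl,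
    fderiv_clm_apply (hB.clm_apply hV) hW, fderiv_clm_apply hB hV]
  simp only [ContinuousLinearMap.add_apply, ContinuousLinearMap.coe_comp', Function.comp_apply,
    ContinuousLinearMap.flip_apply]
  abel

end Aux

section GcSec
variable {d : ℕ}

noncomputable def Gc (g : Vec d → Vec d →ₗ[ℝ] Vec d →ₗ[ℝ] ℝ) (y : Vec d) :
    Vec d →L[ℝ] Vec d →L[ℝ] ℝ :=
  LinearMap.toContinuousLinearMap
    ((LinearMap.toContinuousLinearMap :
      (Vec d →ₗ[ℝ] ℝ) ≃ₗ[ℝ] (Vec d →L[ℝ] ℝ)).toLinearMap ∘ₗ (g y))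

@[simp] theorem Gc_apply (g : Vec d → Vec d →ₗ[ℝ] Vec d →ₗ[ℝ] ℝ) (y u v : Vec d) :
    Gc g y u v = g y u v := by
  simp [Gc]

theorem contDiff_Gc {g : Vec d → Vec d →ₗ[ℝ] Vec d →ₗ[ℝ] ℝ}
    (hg : ∀ u v, ContDiff ℝ (⊤ : ℕ∞) (fun x => g x u v)) : ContDiff ℝ (⊤ : ℕ∞) (Gc g) := by
  rw [contDiff_clm_apply_iff]
  intro u
  rw [contDiff_clm_apply_iff]
  intro v
  simpa using hg u v

noncomputable instance instV3 : NormedAddCommGroup (Vec d →L[ℝ] Vec d →L[ℝ] Vec d →L[ℝ] ℝ) :=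
  @ContinuousLinearMap.toNormedAddCommGroup ℝ ℝ (Vec d) (Vec d →L[ℝ] Vec d →L[ℝ] ℝ) _ _ _ _ _ _ (RingHom.id ℝ) _

noncomputable instance instV3s : NormedSpace ℝ (Vec d →L[ℝ] Vec d →L[ℝ] Vec d →L[ℝ] ℝ) :=
  @ContinuousLinearMap.toNormedSpace ℝ ℝ (Vec d) (Vec d →L[ℝ] Vec d →L[ℝ] ℝ) _ _ _ _ _ _ (RingHom.id ℝ) _ ℝ _ _ _

end GcSec


/- STATEMENT 19 (Mario's formula): on a finite-dimensional Riemannian manifold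
(presented in a chart: metric g, Levi-Civita Christoffel symbols Γ given by
the Koszul formula), for closed 1-forms α, β with raised vector fields
α♯ = Xα, β♯ = Xβ (g(Xα,·) = α), and with Sc, Sa, Sb the vector fields raising
the closed 1-forms d(g⁻¹(α,β)), d(‖α‖²_{g⁻¹}), d(‖β‖²_{g⁻¹}) respectively
(so e.g. ‖d(g⁻¹(α,β))‖²_{g⁻¹} = d(g⁻¹(α,β))(Sc)), the numerator of sectional
curvature is
g(R(α♯,β♯)α♯,β♯) = -(1/2)α♯α♯(‖β‖²) - (1/2)β♯β♯(‖α‖²)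
  + (1/2)(α♯β♯+β♯α♯)(g⁻¹(α,β)) - (1/4)‖d(g⁻¹(α,β))‖²_{g⁻¹}
  + (1/4)g⁻¹(d‖α‖², d‖β‖²) + (3/4)‖[α♯,β♯]‖²_g. -/
set_option maxHeartbeats 2000000 in
theorem mario_formula {d : ℕ}
    (g : Vec d → Vec d →ₗ[ℝ] Vec d →ₗ[ℝ] ℝ)
    (hg_smooth : ∀ u v, ContDiff ℝ (⊤ : ℕ∞) (fun x => g x u v))
    (hg_symm : ∀ x u v, g x u v = g x v u)
    (hg_pos : ∀ x (u : Vec d), u ≠ 0 → 0 < g x u u)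
    (Γ : Vec d → Vec d → Vec d → Vec d)
    (hΓ_smooth : ∀ u v, ContDiff ℝ (⊤ : ℕ∞) (fun x => Γ x u v))
    (hΓ : ∀ x u v w, g x (Γ x u v) w =
      (1 / 2) * ((fderiv ℝ (fun y => g y v w) x) u
        + (fderiv ℝ (fun y => g y u w) x) v
        - (fderiv ℝ (fun y => g y u v) x) w))
    (α β : Vec d → Vec d →L[ℝ] ℝ)
    (hα_smooth : ContDiff ℝ (⊤ : ℕ∞) α) (hβ_smooth : ContDiff ℝ (⊤ : ℕ∞) β)
    (hα_closed : ∀ x u v, (fderiv ℝ α x u) v = (fderiv ℝ α x v) u)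
    (hβ_closed : ∀ x u v, (fderiv ℝ β x u) v = (fderiv ℝ β x v) u)
    (Xα Xβ : Vec d → Vec d)
    (hXα_smooth : ContDiff ℝ (⊤ : ℕ∞) Xα) (hXβ_smooth : ContDiff ℝ (⊤ : ℕ∞) Xβ)
    (hXα : ∀ x w, g x (Xα x) w = α x w)
    (hXβ : ∀ x w, g x (Xβ x) w = β x w)
    (Sc Sa Sb : Vec d → Vec d)
    (hSc : ∀ x w, g x (Sc x) w = fderiv ℝ (fun y => α y (Xβ y)) x w)
    (hSa : ∀ x w, g x (Sa x) w = fderiv ℝ (fun y => α y (Xα y)) x w)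
    (hSb : ∀ x w, g x (Sb x) w = fderiv ℝ (fun y => β y (Xβ y)) x w) :
    ∀ x,
      g x (riemCurv Γ x (Xα x) (Xβ x) (Xα x)) (Xβ x) =
        -(1 / 2) * fderiv ℝ
            (fun y => fderiv ℝ (fun z => β z (Xβ z)) y (Xα y)) x (Xα x)
        - (1 / 2) * fderiv ℝ
            (fun y => fderiv ℝ (fun z => α z (Xα z)) y (Xβ y)) x (Xβ x)
        + (1 / 2) * (fderiv ℝ
              (fun y => fderiv ℝ (fun z => α z (Xβ z)) y (Xβ y)) x (Xα x)
            + fderiv ℝ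
              (fun y => fderiv ℝ (fun z => α z (Xβ z)) y (Xα y)) x (Xβ x))
        - (1 / 4) * fderiv ℝ (fun y => α y (Xβ y)) x (Sc x)
        + (1 / 4) * fderiv ℝ (fun y => α y (Xα y)) x (Sb x)
        + (3 / 4) * g x
            (fderiv ℝ Xβ x (Xα x) - fderiv ℝ Xα x (Xβ x))
            (fderiv ℝ Xβ x (Xα x) - fderiv ℝ Xα x (Xβ x)) := by
  -- rewrite the 1-forms in terms of the metric
  have hfcfun : (fun y => α y (Xβ y)) = fun y => g y (Xα y) (Xβ y) :=
    funext fun y => (hXα y (Xβ y)).symm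
  have hfafun : (fun y => α y (Xα y)) = fun y => g y (Xα y) (Xα y) :=
    funext fun y => (hXα y (Xα y)).symm
  have hfbfun : (fun y => β y (Xβ y)) = fun y => g y (Xβ y) (Xβ y) :=
    funext fun y => (hXβ y (Xβ y)).symm
  rw [hfcfun] at hSc
  rw [hfafun] at hSa
  rw [hfbfun] at hSb
  simp only [hfcfun, hfafun, hfbfun]
  intro x
  -- basic smoothness / differentiability facts
  have hGcs : ContDiff ℝ (⊤ : ℕ∞) (Gc g) := contDiff_Gc hg_smooth
  have hGcd : ∀ y, DifferentiableAt ℝ (Gc g) y := fun y => (hGcs.differentiable (show ((⊤ : ℕ∞) : WithTop ℕ∞) ≠ 0 by simp)) y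
  have hdGcs : ContDiff ℝ (⊤ : ℕ∞) (fderiv ℝ (Gc g)) := hGcs.fderiv_right (by simp)
  have hdGcd : ∀ y, DifferentiableAt ℝ (fderiv ℝ (Gc g)) y :=
    fun y => (hdGcs.differentiable (show ((⊤ : ℕ∞) : WithTop ℕ∞) ≠ 0 by simp)) y
  have hXad : ∀ y, DifferentiableAt ℝ Xα y := fun y => (hXα_smooth.differentiable (show ((⊤ : ℕ∞) : WithTop ℕ∞) ≠ 0 by simp)) y
  have hXbd : ∀ y, DifferentiableAt ℝ Xβ y := fun y => (hXβ_smooth.differentiable (show ((⊤ : ℕ∞) : WithTop ℕ∞) ≠ 0 by simp)) y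
  -- scalar coefficient derivatives of the metric
  have e0 : ∀ (y w p q : Vec d),
      fderiv ℝ (fun z => g z p q) y w = fderiv ℝ (Gc g) y w p q := by
    intro y w p q
    rw [show (fun z => g z p q) = fun z => Gc g z p q from funext fun z => (Gc_apply g z p q).symm]
    exact fdc2 (hGcd y) p q w
  have hdd : ∀ (w1 w2 p q : Vec d),
      fderiv ℝ (fun y => fderiv ℝ (fun z => g z p q) y w2) x w1
        = fderiv ℝ (fderiv ℝ (Gc g)) x w1 w2 p q := by
    intro w1 w2 p q
    rw [show (fun y => fderiv ℝ (fun z => g z p q) y w2)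
        = fun y => fderiv ℝ (Gc g) y w2 p q from funext fun y => by rw [e0 y w2 p q]]
    exact fdc3 (hdGcd x) w2 p q w1
  have hddsy12 : ∀ (w1 w2 p q : Vec d),
      fderiv ℝ (fderiv ℝ (Gc g)) x w1 w2 p q = fderiv ℝ (fderiv ℝ (Gc g)) x w2 w1 p q := by
    intro w1 w2 p q
    rw [schwarz hGcs x w1 w2]
  have hddsypq : ∀ (w1 w2 p q : Vec d),
      fderiv ℝ (fderiv ℝ (Gc g)) x w1 w2 p q = fderiv ℝ (fderiv ℝ (Gc g)) x w1 w2 q p := by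
    intro w1 w2 p q
    rw [← hdd w1 w2 p q, ← hdd w1 w2 q p,
      show (fun z => g z p q) = fun z => g z q p from funext fun z => hg_symm z p q]
  have hdGsy : ∀ (y w p q : Vec d),
      fderiv ℝ (Gc g) y w p q = fderiv ℝ (Gc g) y w q p := by
    intro y w p q
    rw [← e0 y w p q, ← e0 y w q p,
      show (fun z => g z p q) = fun z => g z q p from funext fun z => hg_symm z p q]
  -- nondegeneracy of the metric
  have hinjAt : ∀ (y : Vec d) (c c' : Vec d), (∀ w, g y c w = g y c' w) → c = c' := by
    intro y c c' h
    by_contra hne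
    have h0 : g y (c - c') (c - c') = 0 := by
      have h1 := h (c - c')
      have h2 : g y (c - c') (c - c') = g y c (c - c') - g y c' (c - c') := by
        simp only [map_sub, LinearMap.sub_apply]
        ring
      rw [h2, h1]; ring
    exact absurd h0 (ne_of_gt (hg_pos y _ (sub_ne_zero.mpr hne)))
  -- torsion-freeness
  have hGsy : ∀ (y u v : Vec d), Γ y u v = Γ y v u := by
    intro y u v
    apply hinjAt y
    intro w
    rw [hΓ y u v w, hΓ y v u w,
      show (fun z => g z u v) = fun z => g z v u from funext fun z => hg_symm z u v]
    ring
  -- metric compatibility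
  have hL2 : ∀ (w p q : Vec d),
      fderiv ℝ (Gc g) x w p q = g x (Γ x w p) q + g x p (Γ x w q) := by
    intro w p q
    have h1 := hΓ x w p q
    have h2 := hΓ x w q p
    rw [e0, e0, e0] at h1
    rw [e0, e0, e0] at h2
    rw [hg_symm x p (Γ x w q), h1, h2]
    have s1 := hdGsy x w p q
    have s2 := hdGsy x p w q
    have s3 := hdGsy x q w p
    linarith
  -- product rule for the metric pairing of two vector fields
  have hE1 : ∀ (V W : Vec d → Vec d), ContDiff ℝ (⊤ : ℕ∞) V → ContDiff ℝ (⊤ : ℕ∞) W → ∀ (y w : Vec d),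
      fderiv ℝ (fun z => g z (V z) (W z)) y w
        = fderiv ℝ (Gc g) y w (V y) (W y) + g y (fderiv ℝ V y w) (W y)
          + g y (V y) (fderiv ℝ W y w) := by
    intro V W hV hW y w
    rw [show (fun z => g z (V z) (W z)) = fun z => Gc g z (V z) (W z) from
      funext fun z => (Gc_apply g z (V z) (W z)).symm]
    have h := fderiv_bil (hGcd y) ((hV.differentiable (show ((⊤ : ℕ∞) : WithTop ℕ∞) ≠ 0 by simp)) y) ((hW.differentiable (show ((⊤ : ℕ∞) : WithTop ℕ∞) ≠ 0 by simp)) y) w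
    rw [h, Gc_apply, Gc_apply]
  have hE1r : ∀ (V : Vec d → Vec d), ContDiff ℝ (⊤ : ℕ∞) V → ∀ (q y w : Vec d),
      fderiv ℝ (fun z => g z (V z) q) y w
        = fderiv ℝ (Gc g) y w (V y) q + g y (fderiv ℝ V y w) q := by
    intro V hV q y w
    have h := hE1 V (fun _ => q) hV contDiff_const y w
    simpa using h
  -- product rule for the first-derivative pairing of two vector fields
  have hE2 : ∀ (V W : Vec d → Vec d), ContDiff ℝ (⊤ : ℕ∞) V → ContDiff ℝ (⊤ : ℕ∞) W → ∀ (u w : Vec d),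
      fderiv ℝ (fun z => fderiv ℝ (Gc g) z u (V z) (W z)) x w
        = fderiv ℝ (fderiv ℝ (Gc g)) x w u (V x) (W x)
          + fderiv ℝ (Gc g) x u (fderiv ℝ V x w) (W x)
          + fderiv ℝ (Gc g) x u (V x) (fderiv ℝ W x w) := by
    intro V W hV hW u w
    have hB : DifferentiableAt ℝ (fun z => fderiv ℝ (Gc g) z u) x :=
      (hdGcd x).clm_apply (c := fderiv ℝ (Gc g)) (differentiableAt_const u)
    have h := fderiv_bil (B := fun z => fderiv ℝ (Gc g) z u) hB
      ((hV.differentiable (show ((⊤ : ℕ∞) : WithTop ℕ∞) ≠ 0 by simp)) x) ((hW.differentiable (show ((⊤ : ℕ∞) : WithTop ℕ∞) ≠ 0 by simp)) x) w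
    rw [h, fdc1 (f := fderiv ℝ (Gc g)) (hdGcd x) u w]
  have hE2r : ∀ (V : Vec d → Vec d), ContDiff ℝ (⊤ : ℕ∞) V → ∀ (u q w : Vec d),
      fderiv ℝ (fun z => fderiv ℝ (Gc g) z u (V z) q) x w
        = fderiv ℝ (fderiv ℝ (Gc g)) x w u (V x) q
          + fderiv ℝ (Gc g) x u (fderiv ℝ V x w) q := by
    intro V hV u q w
    have h := hE2 V (fun _ => q) hV contDiff_const u w
    simpa using h
  -- closedness of α and β, in metric form
  have hdα : ∀ (y u w : Vec d),
      fderiv ℝ (fun z => g z (Xα z) w) y u = fderiv ℝ (fun z => g z (Xα z) u) y w := by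
    intro y u w
    rw [show (fun z => g z (Xα z) w) = fun z => α z w from funext fun z => hXα z w,
      show (fun z => g z (Xα z) u) = fun z => α z u from funext fun z => hXα z u,
      fdc1 ((hα_smooth.differentiable (show ((⊤ : ℕ∞) : WithTop ℕ∞) ≠ 0 by simp)) y) w u,
      fdc1 ((hα_smooth.differentiable (show ((⊤ : ℕ∞) : WithTop ℕ∞) ≠ 0 by simp)) y) u w]
    exact hα_closed y u w
  have hdβ : ∀ (y u w : Vec d),
      fderiv ℝ (fun z => g z (Xβ z) w) y u = fderiv ℝ (fun z => g z (Xβ z) u) y w := by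
    intro y u w
    rw [show (fun z => g z (Xβ z) w) = fun z => β z w from funext fun z => hXβ z w,
      show (fun z => g z (Xβ z) u) = fun z => β z u from funext fun z => hXβ z u,
      fdc1 ((hβ_smooth.differentiable (show ((⊤ : ℕ∞) : WithTop ℕ∞) ≠ 0 by simp)) y) w u,
      fdc1 ((hβ_smooth.differentiable (show ((⊤ : ℕ∞) : WithTop ℕ∞) ≠ 0 by simp)) y) u w]
    exact hβ_closed y u w
  have hCa : ∀ (u w : Vec d),
      fderiv ℝ (Gc g) x u (Xα x) w + g x (fderiv ℝ Xα x u) w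
        = fderiv ℝ (Gc g) x w (Xα x) u + g x (fderiv ℝ Xα x w) u := by
    intro u w
    have h := hdα x u w
    rw [hE1r Xα hXα_smooth w x u, hE1r Xα hXα_smooth u x w] at h
    linarith
  have hCb : ∀ (u w : Vec d),
      fderiv ℝ (Gc g) x u (Xβ x) w + g x (fderiv ℝ Xβ x u) w
        = fderiv ℝ (Gc g) x w (Xβ x) u + g x (fderiv ℝ Xβ x w) u := by
    intro u w
    have h := hdβ x u w
    rw [hE1r Xβ hXβ_smooth w x u, hE1r Xβ hXβ_smooth u x w] at h
    linarith
  -- identification of the raised differentials Sc, Sa, Sb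
  have hScEq : Sc x = fderiv ℝ Xα x (Xβ x) + fderiv ℝ Xβ x (Xα x)
      + (2:ℝ) • Γ x (Xα x) (Xβ x) := by
    apply hinjAt x
    intro w
    have h0 := hSc x w
    have h1 := hE1 Xα Xβ hXα_smooth hXβ_smooth x w
    have h2 := hCa w (Xβ x)
    have h3 := hCb w (Xα x)
    have h4 := hΓ x (Xα x) (Xβ x) w
    simp only [e0] at h4
    have h5 := hg_symm x (Xα x) (fderiv ℝ Xβ x w)
    have h6 := hdGsy x w (Xβ x) (Xα x)
    simp only [map_add, LinearMap.add_apply, map_smul, LinearMap.smul_apply, smul_eq_mul]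
    linarith
  have hSaEq : Sa x = (2:ℝ) • fderiv ℝ Xα x (Xα x) + (2:ℝ) • Γ x (Xα x) (Xα x) := by
    apply hinjAt x
    intro w
    have h0 := hSa x w
    have h1 := hE1 Xα Xα hXα_smooth hXα_smooth x w
    have h2 := hCa w (Xα x)
    have h4 := hΓ x (Xα x) (Xα x) w
    simp only [e0] at h4
    have h5 := hg_symm x (Xα x) (fderiv ℝ Xα x w)
    have h6 := hdGsy x w (Xα x) (Xα x)
    simp only [map_add, LinearMap.add_apply, map_smul, LinearMap.smul_apply, smul_eq_mul]
    linarith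
  have hSbEq : Sb x = (2:ℝ) • fderiv ℝ Xβ x (Xβ x) + (2:ℝ) • Γ x (Xβ x) (Xβ x) := by
    apply hinjAt x
    intro w
    have h0 := hSb x w
    have h1 := hE1 Xβ Xβ hXβ_smooth hXβ_smooth x w
    have h2 := hCb w (Xβ x)
    have h4 := hΓ x (Xβ x) (Xβ x) w
    simp only [e0] at h4
    have h5 := hg_symm x (Xβ x) (fderiv ℝ Xβ x w)
    have h6 := hdGsy x w (Xβ x) (Xβ x)
    simp only [map_add, LinearMap.add_apply, map_smul, LinearMap.smul_apply, smul_eq_mul]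
    linarith
  -- smoothness of metric pairings
  have hsm : ∀ (V W : Vec d → Vec d), ContDiff ℝ (⊤ : ℕ∞) V → ContDiff ℝ (⊤ : ℕ∞) W →
      ContDiff ℝ (⊤ : ℕ∞) (fun y => g y (V y) (W y)) := by
    intro V W hV hW
    rw [show (fun y => g y (V y) (W y)) = fun y => Gc g y (V y) (W y) from
      funext fun y => (Gc_apply g y (V y) (W y)).symm]
    exact (hGcs.clm_apply hV).clm_apply hW
  have hPas : ∀ (u : Vec d), ContDiff ℝ (⊤ : ℕ∞) (fun y => fderiv ℝ Xα y u) :=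
    fun u => (hXα_smooth.fderiv_right (by simp)).clm_apply contDiff_const
  have hPbs : ∀ (u : Vec d), ContDiff ℝ (⊤ : ℕ∞) (fun y => fderiv ℝ Xβ y u) :=
    fun u => (hXβ_smooth.fderiv_right (by simp)).clm_apply contDiff_const
  -- second-order closedness relations (K-expansion)
  have hKa_exp : ∀ (w3 u w : Vec d),
      fderiv ℝ (fun y => fderiv ℝ (fun z => g z (Xα z) w) y u) x w3
        = fderiv ℝ (fderiv ℝ (Gc g)) x w3 u (Xα x) w
          + fderiv ℝ (Gc g) x u (fderiv ℝ Xα x w3) w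
          + fderiv ℝ (Gc g) x w3 (fderiv ℝ Xα x u) w
          + g x (fderiv ℝ (fun y => fderiv ℝ Xα y u) x w3) w := by
    intro w3 u w
    rw [show (fun y => fderiv ℝ (fun z => g z (Xα z) w) y u)
        = fun y => fderiv ℝ (Gc g) y u (Xα y) w + g y (fderiv ℝ Xα y u) w from
      funext fun y => hE1r Xα hXα_smooth w y u]
    have d1 : DifferentiableAt ℝ (fun y => fderiv ℝ (Gc g) y u (Xα y) w) x :=
      ((((hdGcd x).clm_apply (differentiableAt_const u)).clm_apply (hXad x)).clm_apply
        (differentiableAt_const w))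
    have d2 : DifferentiableAt ℝ (fun y => g y (fderiv ℝ Xα y u) w) x :=
      ((hsm (fun y => fderiv ℝ Xα y u) (fun _ => w) (hPas u) contDiff_const).differentiable
        (show ((⊤ : ℕ∞) : WithTop ℕ∞) ≠ 0 by simp) x)
    rw [fderiv_fun_add d1 d2, ContinuousLinearMap.add_apply, hE2r Xα hXα_smooth u w w3,
      hE1r (fun y => fderiv ℝ Xα y u) (hPas u) w x w3]
    ring
  have hKb_exp : ∀ (w3 u w : Vec d),
      fderiv ℝ (fun y => fderiv ℝ (fun z => g z (Xβ z) w) y u) x w3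
        = fderiv ℝ (fderiv ℝ (Gc g)) x w3 u (Xβ x) w
          + fderiv ℝ (Gc g) x u (fderiv ℝ Xβ x w3) w
          + fderiv ℝ (Gc g) x w3 (fderiv ℝ Xβ x u) w
          + g x (fderiv ℝ (fun y => fderiv ℝ Xβ y u) x w3) w := by
    intro w3 u w
    rw [show (fun y => fderiv ℝ (fun z => g z (Xβ z) w) y u)
        = fun y => fderiv ℝ (Gc g) y u (Xβ y) w + g y (fderiv ℝ Xβ y u) w from
      funext fun y => hE1r Xβ hXβ_smooth w y u]
    have d1 : DifferentiableAt ℝ (fun y => fderiv ℝ (Gc g) y u (Xβ y) w) x :=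
      ((((hdGcd x).clm_apply (differentiableAt_const u)).clm_apply (hXbd x)).clm_apply
        (differentiableAt_const w))
    have d2 : DifferentiableAt ℝ (fun y => g y (fderiv ℝ Xβ y u) w) x :=
      ((hsm (fun y => fderiv ℝ Xβ y u) (fun _ => w) (hPbs u) contDiff_const).differentiable
        (show ((⊤ : ℕ∞) : WithTop ℕ∞) ≠ 0 by simp) x)
    rw [fderiv_fun_add d1 d2, ContinuousLinearMap.add_apply, hE2r Xβ hXβ_smooth u w w3,
      hE1r (fun y => fderiv ℝ Xβ y u) (hPbs u) w x w3]
    ring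
  -- symmetry of the iterated derivative (Schwarz) for these scalar functions
  have hKa_sym2 : ∀ (w3 u w : Vec d),
      fderiv ℝ (fun y => fderiv ℝ (fun z => g z (Xα z) w) y u) x w3
        = fderiv ℝ (fun y => fderiv ℝ (fun z => g z (Xα z) w) y w3) x u := by
    intro w3 u w
    have hφ : ContDiff ℝ (⊤ : ℕ∞) (fun z => g z (Xα z) w) := hsm Xα (fun _ => w) hXα_smooth contDiff_const
    have hdφ : DifferentiableAt ℝ (fderiv ℝ (fun z => g z (Xα z) w)) x :=
      (hφ.fderiv_right (by simp)).differentiable (show ((⊤ : ℕ∞) : WithTop ℕ∞) ≠ 0 by simp) x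
    rw [fdc1 hdφ u w3, fdc1 hdφ w3 u, schwarz hφ x w3 u]
  have hKb_sym2 : ∀ (w3 u w : Vec d),
      fderiv ℝ (fun y => fderiv ℝ (fun z => g z (Xβ z) w) y u) x w3
        = fderiv ℝ (fun y => fderiv ℝ (fun z => g z (Xβ z) w) y w3) x u := by
    intro w3 u w
    have hφ : ContDiff ℝ (⊤ : ℕ∞) (fun z => g z (Xβ z) w) := hsm Xβ (fun _ => w) hXβ_smooth contDiff_const
    have hdφ : DifferentiableAt ℝ (fderiv ℝ (fun z => g z (Xβ z) w)) x :=
      (hφ.fderiv_right (by simp)).differentiable (show ((⊤ : ℕ∞) : WithTop ℕ∞) ≠ 0 by simp) x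
    rw [fdc1 hdφ u w3, fdc1 hdφ w3 u, schwarz hφ x w3 u]
  have hKa_sym1 : ∀ (w3 u w : Vec d),
      fderiv ℝ (fun y => fderiv ℝ (fun z => g z (Xα z) w) y u) x w3
        = fderiv ℝ (fun y => fderiv ℝ (fun z => g z (Xα z) u) y w) x w3 := by
    intro w3 u w
    rw [show (fun y => fderiv ℝ (fun z => g z (Xα z) w) y u)
        = fun y => fderiv ℝ (fun z => g z (Xα z) u) y w from funext fun y => hdα y u w]
  have hKb_sym1 : ∀ (w3 u w : Vec d),
      fderiv ℝ (fun y => fderiv ℝ (fun z => g z (Xβ z) w) y u) x w3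
        = fderiv ℝ (fun y => fderiv ℝ (fun z => g z (Xβ z) u) y w) x w3 := by
    intro w3 u w
    rw [show (fun y => fderiv ℝ (fun z => g z (Xβ z) w) y u)
        = fun y => fderiv ℝ (fun z => g z (Xβ z) u) y w from funext fun y => hdβ y u w]
  -- Schwarz symmetry of second derivatives of the vector fields
  have hQa_sym : ∀ (u w : Vec d), fderiv ℝ (fun y => fderiv ℝ Xα y u) x w
      = fderiv ℝ (fun y => fderiv ℝ Xα y w) x u := by
    intro u w
    have hdX : DifferentiableAt ℝ (fderiv ℝ Xα) x :=
      (hXα_smooth.fderiv_right (by simp)).differentiable (show ((⊤ : ℕ∞) : WithTop ℕ∞) ≠ 0 by simp) x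
    rw [fdc1 hdX u w, fdc1 hdX w u]
    exact second_derivative_symmetric (fun y => (hXad y).hasFDerivAt) hdX.hasFDerivAt w u
  have hQb_sym : ∀ (u w : Vec d), fderiv ℝ (fun y => fderiv ℝ Xβ y u) x w
      = fderiv ℝ (fun y => fderiv ℝ Xβ y w) x u := by
    intro u w
    have hdX : DifferentiableAt ℝ (fderiv ℝ Xβ) x :=
      (hXβ_smooth.fderiv_right (by simp)).differentiable (show ((⊤ : ℕ∞) : WithTop ℕ∞) ≠ 0 by simp) x
    rw [fdc1 hdX u w, fdc1 hdX w u]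
    exact second_derivative_symmetric (fun y => (hXbd y).hasFDerivAt) hdX.hasFDerivAt w u
  -- general expansion of the Hessian of a metric pairing of two vector fields
  have hHgen : ∀ (V W : Vec d → Vec d), ContDiff ℝ (⊤ : ℕ∞) V → ContDiff ℝ (⊤ : ℕ∞) W → ∀ (w1 w2 : Vec d),
      fderiv ℝ (fderiv ℝ (fun z => g z (V z) (W z))) x w1 w2
        = fderiv ℝ (fderiv ℝ (Gc g)) x w1 w2 (V x) (W x)
          + fderiv ℝ (Gc g) x w2 (fderiv ℝ V x w1) (W x)
          + fderiv ℝ (Gc g) x w2 (V x) (fderiv ℝ W x w1)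
          + fderiv ℝ (Gc g) x w1 (fderiv ℝ V x w2) (W x)
          + g x (fderiv ℝ (fun y => fderiv ℝ V y w2) x w1) (W x)
          + g x (fderiv ℝ V x w2) (fderiv ℝ W x w1)
          + fderiv ℝ (Gc g) x w1 (V x) (fderiv ℝ W x w2)
          + g x (fderiv ℝ V x w1) (fderiv ℝ W x w2)
          + g x (V x) (fderiv ℝ (fun y => fderiv ℝ W y w2) x w1) := by
    intro V W hV hW w1 w2
    have hVd : ∀ y, DifferentiableAt ℝ V y := fun y => (hV.differentiable (show ((⊤ : ℕ∞) : WithTop ℕ∞) ≠ 0 by simp)) y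
    have hWd : ∀ y, DifferentiableAt ℝ W y := fun y => (hW.differentiable (show ((⊤ : ℕ∞) : WithTop ℕ∞) ≠ 0 by simp)) y
    have hV2 : ContDiff ℝ (⊤ : ℕ∞) (fun y => fderiv ℝ V y w2) :=
      (hV.fderiv_right (by simp)).clm_apply contDiff_const
    have hW2 : ContDiff ℝ (⊤ : ℕ∞) (fun y => fderiv ℝ W y w2) :=
      (hW.fderiv_right (by simp)).clm_apply contDiff_const
    have hfd : DifferentiableAt ℝ (fderiv ℝ (fun z => g z (V z) (W z))) x :=
      ((hsm V W hV hW).fderiv_right (by simp)).differentiable (show ((⊤ : ℕ∞) : WithTop ℕ∞) ≠ 0 by simp) x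
    rw [← fdc1 hfd w2 w1]
    rw [show (fun y => fderiv ℝ (fun z => g z (V z) (W z)) y w2)
        = fun y => fderiv ℝ (Gc g) y w2 (V y) (W y) + g y (fderiv ℝ V y w2) (W y)
          + g y (V y) (fderiv ℝ W y w2) from funext fun y => hE1 V W hV hW y w2]
    have d1 : DifferentiableAt ℝ (fun y => fderiv ℝ (Gc g) y w2 (V y) (W y)) x :=
      (((hdGcd x).clm_apply (differentiableAt_const w2)).clm_apply (hVd x)).clm_apply (hWd x)
    have d2 : DifferentiableAt ℝ (fun y => g y (fderiv ℝ V y w2) (W y)) x :=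
      (hsm (fun y => fderiv ℝ V y w2) W hV2 hW).differentiable (show ((⊤ : ℕ∞) : WithTop ℕ∞) ≠ 0 by simp) x
    have d3 : DifferentiableAt ℝ (fun y => g y (V y) (fderiv ℝ W y w2)) x :=
      (hsm V (fun y => fderiv ℝ W y w2) hV hW2).differentiable (show ((⊤ : ℕ∞) : WithTop ℕ∞) ≠ 0 by simp) x
    rw [fderiv_fun_add (d1.fun_add d2) d3, fderiv_fun_add d1 d2, ContinuousLinearMap.add_apply,
      ContinuousLinearMap.add_apply, hE2 V W hV hW w2 w1,
      hE1 (fun y => fderiv ℝ V y w2) W hV2 hW x w1,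
      hE1 V (fun y => fderiv ℝ W y w2) hV hW2 x w1]
    ring
  -- first derivatives of the three scalar pairings, via Sc, Sa, Sb
  have hfcT : ∀ (w : Vec d), fderiv ℝ (fun z => g z (Xα z) (Xβ z)) x w
      = g x (fderiv ℝ Xα x (Xβ x)) w + g x (fderiv ℝ Xβ x (Xα x)) w
        + 2 * g x (Γ x (Xα x) (Xβ x)) w := by
    intro w
    rw [← hSc x w, hScEq]
    simp only [map_add, LinearMap.add_apply, map_smul, LinearMap.smul_apply, smul_eq_mul]
  have hfaT : ∀ (w : Vec d), fderiv ℝ (fun z => g z (Xα z) (Xα z)) x w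
      = 2 * g x (fderiv ℝ Xα x (Xα x)) w + 2 * g x (Γ x (Xα x) (Xα x)) w := by
    intro w
    rw [← hSa x w, hSaEq]
    simp only [map_add, LinearMap.add_apply, map_smul, LinearMap.smul_apply, smul_eq_mul]
  have hfbT : ∀ (w : Vec d), fderiv ℝ (fun z => g z (Xβ z) (Xβ z)) x w
      = 2 * g x (fderiv ℝ Xβ x (Xβ x)) w + 2 * g x (Γ x (Xβ x) (Xβ x)) w := by
    intro w
    rw [← hSb x w, hSbEq]
    simp only [map_add, LinearMap.add_apply, map_smul, LinearMap.smul_apply, smul_eq_mul]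
  -- expansion of the curvature term
  have hRiem : g x (riemCurv Γ x (Xα x) (Xβ x) (Xα x)) (Xβ x)
      = g x (fderiv ℝ (fun y => Γ y (Xα x) (Xβ x)) x (Xα x)) (Xβ x)
        - g x (fderiv ℝ (fun y => Γ y (Xα x) (Xα x)) x (Xβ x)) (Xβ x)
        + g x (Γ x (Xα x) (Γ x (Xα x) (Xβ x))) (Xβ x)
        - g x (Γ x (Xβ x) (Γ x (Xα x) (Xα x))) (Xβ x) := by
    simp only [riemCurv]
    rw [show (fun y => Γ y (Xβ x) (Xα x)) = fun y => Γ y (Xα x) (Xβ x) from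
        funext fun y => hGsy y (Xβ x) (Xα x), hGsy x (Xβ x) (Xα x)]
    simp only [map_sub, map_add, LinearMap.sub_apply, LinearMap.add_apply]
  have hT1 : g x (fderiv ℝ (fun y => Γ y (Xα x) (Xβ x)) x (Xα x)) (Xβ x)
      = (1/2) * fderiv ℝ (fderiv ℝ (Gc g)) x (Xα x) (Xα x) (Xβ x) (Xβ x)
        - g x (Γ x (Xα x) (Γ x (Xα x) (Xβ x))) (Xβ x)
        - g x (Γ x (Xα x) (Xβ x)) (Γ x (Xα x) (Xβ x)) := by
    have hsc1 : (fun y => g y (Γ y (Xα x) (Xβ x)) (Xβ x))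
        = fun y => (1/2) * fderiv ℝ (fun z => g z (Xβ x) (Xβ x)) y (Xα x) := by
      funext y
      rw [hΓ y (Xα x) (Xβ x) (Xβ x)]
      ring
    have h1 := hE1r (fun y => Γ y (Xα x) (Xβ x)) (hΓ_smooth (Xα x) (Xβ x)) (Xβ x) x (Xα x)
    have h2 : fderiv ℝ (fun z => g z (Γ z (Xα x) (Xβ x)) (Xβ x)) x (Xα x)
        = (1/2) * fderiv ℝ (fderiv ℝ (Gc g)) x (Xα x) (Xα x) (Xβ x) (Xβ x) := by
      rw [hsc1]
      have hdf : DifferentiableAt ℝ (fun y => fderiv ℝ (fun z => g z (Xβ x) (Xβ x)) y (Xα x)) x := by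
        rw [show (fun y => fderiv ℝ (fun z => g z (Xβ x) (Xβ x)) y (Xα x))
            = fun y => fderiv ℝ (Gc g) y (Xα x) (Xβ x) (Xβ x) from
          funext fun y => e0 y (Xα x) (Xβ x) (Xβ x)]
        exact (((hdGcd x).clm_apply (differentiableAt_const _)).clm_apply
          (differentiableAt_const _)).clm_apply (differentiableAt_const _)
      rw [fderiv_const_mul hdf (1/2 : ℝ), ContinuousLinearMap.smul_apply,
        hdd (Xα x) (Xα x) (Xβ x) (Xβ x), smul_eq_mul]
    have h3 := hL2 (Xα x) (Γ x (Xα x) (Xβ x)) (Xβ x)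
    linarith
  have hT2 : g x (fderiv ℝ (fun y => Γ y (Xα x) (Xα x)) x (Xβ x)) (Xβ x)
      = fderiv ℝ (fderiv ℝ (Gc g)) x (Xβ x) (Xα x) (Xα x) (Xβ x)
        - (1/2) * fderiv ℝ (fderiv ℝ (Gc g)) x (Xβ x) (Xβ x) (Xα x) (Xα x)
        - g x (Γ x (Xβ x) (Γ x (Xα x) (Xα x))) (Xβ x)
        - g x (Γ x (Xα x) (Xα x)) (Γ x (Xβ x) (Xβ x)) := by
    have hsc2 : (fun y => g y (Γ y (Xα x) (Xα x)) (Xβ x))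
        = fun y => fderiv ℝ (fun z => g z (Xα x) (Xβ x)) y (Xα x)
          - (1/2) * fderiv ℝ (fun z => g z (Xα x) (Xα x)) y (Xβ x) := by
      funext y
      rw [hΓ y (Xα x) (Xα x) (Xβ x)]
      ring
    have h1 := hE1r (fun y => Γ y (Xα x) (Xα x)) (hΓ_smooth (Xα x) (Xα x)) (Xβ x) x (Xβ x)
    have hd1 : DifferentiableAt ℝ (fun y => fderiv ℝ (fun z => g z (Xα x) (Xβ x)) y (Xα x)) x := by
      rw [show (fun y => fderiv ℝ (fun z => g z (Xα x) (Xβ x)) y (Xα x))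
          = fun y => fderiv ℝ (Gc g) y (Xα x) (Xα x) (Xβ x) from
        funext fun y => e0 y (Xα x) (Xα x) (Xβ x)]
      exact (((hdGcd x).clm_apply (differentiableAt_const _)).clm_apply
        (differentiableAt_const _)).clm_apply (differentiableAt_const _)
    have hd2 : DifferentiableAt ℝ (fun y => fderiv ℝ (fun z => g z (Xα x) (Xα x)) y (Xβ x)) x := by
      rw [show (fun y => fderiv ℝ (fun z => g z (Xα x) (Xα x)) y (Xβ x))
          = fun y => fderiv ℝ (Gc g) y (Xβ x) (Xα x) (Xα x) from
        funext fun y => e0 y (Xβ x) (Xα x) (Xα x)]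
      exact (((hdGcd x).clm_apply (differentiableAt_const _)).clm_apply
        (differentiableAt_const _)).clm_apply (differentiableAt_const _)
    have h2 : fderiv ℝ (fun z => g z (Γ z (Xα x) (Xα x)) (Xβ x)) x (Xβ x)
        = fderiv ℝ (fderiv ℝ (Gc g)) x (Xβ x) (Xα x) (Xα x) (Xβ x)
          - (1/2) * fderiv ℝ (fderiv ℝ (Gc g)) x (Xβ x) (Xβ x) (Xα x) (Xα x) := by
      rw [hsc2, fderiv_fun_sub hd1 (hd2.const_mul (1/2 : ℝ)), ContinuousLinearMap.sub_apply,
        fderiv_const_mul hd2 (1/2 : ℝ), ContinuousLinearMap.smul_apply,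
        hdd (Xβ x) (Xα x) (Xα x) (Xβ x), hdd (Xβ x) (Xβ x) (Xα x) (Xα x), smul_eq_mul]
    have h3 := hL2 (Xβ x) (Γ x (Xα x) (Xα x)) (Xβ x)
    linarith
  -- outer splits of the four second-derivative terms
  have hfc2 : ContDiff ℝ (⊤ : ℕ∞) (fun z => g z (Xα z) (Xβ z)) := hsm Xα Xβ hXα_smooth hXβ_smooth
  have hfa2 : ContDiff ℝ (⊤ : ℕ∞) (fun z => g z (Xα z) (Xα z)) := hsm Xα Xα hXα_smooth hXα_smooth
  have hfb2 : ContDiff ℝ (⊤ : ℕ∞) (fun z => g z (Xβ z) (Xβ z)) := hsm Xβ Xβ hXβ_smooth hXβ_smooth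
  have hdfc : DifferentiableAt ℝ (fderiv ℝ (fun z => g z (Xα z) (Xβ z))) x :=
    (hfc2.fderiv_right (by simp)).differentiable (show ((⊤ : ℕ∞) : WithTop ℕ∞) ≠ 0 by simp) x
  have hdfa : DifferentiableAt ℝ (fderiv ℝ (fun z => g z (Xα z) (Xα z))) x :=
    (hfa2.fderiv_right (by simp)).differentiable (show ((⊤ : ℕ∞) : WithTop ℕ∞) ≠ 0 by simp) x
  have hdfb : DifferentiableAt ℝ (fderiv ℝ (fun z => g z (Xβ z) (Xβ z))) x :=
    (hfb2.fderiv_right (by simp)).differentiable (show ((⊤ : ℕ∞) : WithTop ℕ∞) ≠ 0 by simp) x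
  have hXXs : fderiv ℝ (fun y => fderiv ℝ (fun z => g z (Xβ z) (Xβ z)) y (Xα y)) x (Xα x)
      = fderiv ℝ (fderiv ℝ (fun z => g z (Xβ z) (Xβ z))) x (Xα x) (Xα x)
        + fderiv ℝ (fun z => g z (Xβ z) (Xβ z)) x (fderiv ℝ Xα x (Xα x)) := by
    rw [fderiv_clm_apply hdfb (hXad x)]
    simp only [ContinuousLinearMap.add_apply, ContinuousLinearMap.coe_comp',
      Function.comp_apply, ContinuousLinearMap.flip_apply]
    ring
  have hYYs : fderiv ℝ (fun y => fderiv ℝ (fun z => g z (Xα z) (Xα z)) y (Xβ y)) x (Xβ x)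
      = fderiv ℝ (fderiv ℝ (fun z => g z (Xα z) (Xα z))) x (Xβ x) (Xβ x)
        + fderiv ℝ (fun z => g z (Xα z) (Xα z)) x (fderiv ℝ Xβ x (Xβ x)) := by
    rw [fderiv_clm_apply hdfa (hXbd x)]
    simp only [ContinuousLinearMap.add_apply, ContinuousLinearMap.coe_comp',
      Function.comp_apply, ContinuousLinearMap.flip_apply]
    ring
  have hXYs : fderiv ℝ (fun y => fderiv ℝ (fun z => g z (Xα z) (Xβ z)) y (Xβ y)) x (Xα x)
      = fderiv ℝ (fderiv ℝ (fun z => g z (Xα z) (Xβ z))) x (Xα x) (Xβ x)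
        + fderiv ℝ (fun z => g z (Xα z) (Xβ z)) x (fderiv ℝ Xβ x (Xα x)) := by
    rw [fderiv_clm_apply hdfc (hXbd x)]
    simp only [ContinuousLinearMap.add_apply, ContinuousLinearMap.coe_comp',
      Function.comp_apply, ContinuousLinearMap.flip_apply]
    ring
  have hYXs : fderiv ℝ (fun y => fderiv ℝ (fun z => g z (Xα z) (Xβ z)) y (Xα y)) x (Xβ x)
      = fderiv ℝ (fderiv ℝ (fun z => g z (Xα z) (Xβ z))) x (Xβ x) (Xα x)
        + fderiv ℝ (fun z => g z (Xα z) (Xβ z)) x (fderiv ℝ Xα x (Xβ x)) := by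
    rw [fderiv_clm_apply hdfc (hXad x)]
    simp only [ContinuousLinearMap.add_apply, ContinuousLinearMap.coe_comp',
      Function.comp_apply, ContinuousLinearMap.flip_apply]
    ring
  -- Hessian expansions
  have hHb := hHgen Xβ Xβ hXβ_smooth hXβ_smooth (Xα x) (Xα x)
  have hHa := hHgen Xα Xα hXα_smooth hXα_smooth (Xβ x) (Xβ x)
  have hHc1 := hHgen Xα Xβ hXα_smooth hXβ_smooth (Xα x) (Xβ x)
  have hHc2 := hHgen Xα Xβ hXα_smooth hXβ_smooth (Xβ x) (Xα x)
  -- quadratic expansions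
  have hTcEq : fderiv ℝ (fun z => g z (Xα z) (Xβ z)) x (Sc x)
      = g x (fderiv ℝ Xα x (Xβ x)) (fderiv ℝ Xα x (Xβ x))
        + g x (fderiv ℝ Xα x (Xβ x)) (fderiv ℝ Xβ x (Xα x))
        + 2 * g x (fderiv ℝ Xα x (Xβ x)) (Γ x (Xα x) (Xβ x))
        + g x (fderiv ℝ Xβ x (Xα x)) (fderiv ℝ Xα x (Xβ x))
        + g x (fderiv ℝ Xβ x (Xα x)) (fderiv ℝ Xβ x (Xα x))
        + 2 * g x (fderiv ℝ Xβ x (Xα x)) (Γ x (Xα x) (Xβ x))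
        + 2 * g x (Γ x (Xα x) (Xβ x)) (fderiv ℝ Xα x (Xβ x))
        + 2 * g x (Γ x (Xα x) (Xβ x)) (fderiv ℝ Xβ x (Xα x))
        + 4 * g x (Γ x (Xα x) (Xβ x)) (Γ x (Xα x) (Xβ x)) := by
    rw [hfcT (Sc x), hScEq]
    simp only [map_add, LinearMap.add_apply, map_smul, LinearMap.smul_apply, smul_eq_mul]
    ring
  have hTbEq : fderiv ℝ (fun z => g z (Xα z) (Xα z)) x (Sb x)
      = 4 * g x (fderiv ℝ Xα x (Xα x)) (fderiv ℝ Xβ x (Xβ x))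
        + 4 * g x (fderiv ℝ Xα x (Xα x)) (Γ x (Xβ x) (Xβ x))
        + 4 * g x (Γ x (Xα x) (Xα x)) (fderiv ℝ Xβ x (Xβ x))
        + 4 * g x (Γ x (Xα x) (Xα x)) (Γ x (Xβ x) (Xβ x)) := by
    rw [hfaT (Sb x), hSbEq]
    simp only [map_add, LinearMap.add_apply, map_smul, LinearMap.smul_apply, smul_eq_mul]
    ring
  have hBr : g x (fderiv ℝ Xβ x (Xα x) - fderiv ℝ Xα x (Xβ x))
        (fderiv ℝ Xβ x (Xα x) - fderiv ℝ Xα x (Xβ x))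
      = g x (fderiv ℝ Xβ x (Xα x)) (fderiv ℝ Xβ x (Xα x))
        - g x (fderiv ℝ Xβ x (Xα x)) (fderiv ℝ Xα x (Xβ x))
        - g x (fderiv ℝ Xα x (Xβ x)) (fderiv ℝ Xβ x (Xα x))
        + g x (fderiv ℝ Xα x (Xβ x)) (fderiv ℝ Xα x (Xβ x)) := by
    simp only [map_sub, LinearMap.sub_apply]
    ring
  -- second-order closedness relation instances
  have hKa0 := hKa_sym2 (Xα x) (Xβ x) (Xβ x)
  rw [hKa_exp (Xα x) (Xβ x) (Xβ x), hKa_exp (Xβ x) (Xα x) (Xβ x)] at hKa0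
  have hKa1 := hKa_sym1 (Xβ x) (Xα x) (Xβ x)
  rw [hKa_exp (Xβ x) (Xα x) (Xβ x), hKa_exp (Xβ x) (Xβ x) (Xα x)] at hKa1
  have hKa2 := hKa_sym1 (Xα x) (Xα x) (Xβ x)
  rw [hKa_exp (Xα x) (Xα x) (Xβ x), hKa_exp (Xα x) (Xβ x) (Xα x)] at hKa2
  have hKa3 := hKa_sym2 (Xα x) (Xβ x) (Xα x)
  rw [hKa_exp (Xα x) (Xβ x) (Xα x), hKa_exp (Xβ x) (Xα x) (Xα x)] at hKa3
  have hKb0 := hKb_sym2 (Xα x) (Xβ x) (Xβ x)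
  rw [hKb_exp (Xα x) (Xβ x) (Xβ x), hKb_exp (Xβ x) (Xα x) (Xβ x)] at hKb0
  have hKb1 := hKb_sym1 (Xβ x) (Xα x) (Xβ x)
  rw [hKb_exp (Xβ x) (Xα x) (Xβ x), hKb_exp (Xβ x) (Xβ x) (Xα x)] at hKb1
  have hKb2 := hKb_sym1 (Xα x) (Xα x) (Xβ x)
  rw [hKb_exp (Xα x) (Xα x) (Xβ x), hKb_exp (Xα x) (Xβ x) (Xα x)] at hKb2
  have hKb3 := hKb_sym2 (Xα x) (Xβ x) (Xα x)
  rw [hKb_exp (Xα x) (Xβ x) (Xα x), hKb_exp (Xβ x) (Xα x) (Xα x)] at hKb3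
  -- symmetry facts for the second derivatives of the vector fields, paired with the metric
  have hQagb : g x (fderiv ℝ (fun y => fderiv ℝ Xα y (Xβ x)) x (Xα x)) (Xβ x)
      = g x (fderiv ℝ (fun y => fderiv ℝ Xα y (Xα x)) x (Xβ x)) (Xβ x) := by
    rw [hQa_sym (Xβ x) (Xα x)]
  have hQaga : g x (fderiv ℝ (fun y => fderiv ℝ Xα y (Xβ x)) x (Xα x)) (Xα x)
      = g x (fderiv ℝ (fun y => fderiv ℝ Xα y (Xα x)) x (Xβ x)) (Xα x) := by
    rw [hQa_sym (Xβ x) (Xα x)]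
  have hQbgb : g x (fderiv ℝ (fun y => fderiv ℝ Xβ y (Xβ x)) x (Xα x)) (Xβ x)
      = g x (fderiv ℝ (fun y => fderiv ℝ Xβ y (Xα x)) x (Xβ x)) (Xβ x) := by
    rw [hQb_sym (Xβ x) (Xα x)]
  have hQbga : g x (fderiv ℝ (fun y => fderiv ℝ Xβ y (Xβ x)) x (Xα x)) (Xα x)
      = g x (fderiv ℝ (fun y => fderiv ℝ Xβ y (Xα x)) x (Xβ x)) (Xα x) := by
    rw [hQb_sym (Xβ x) (Xα x)]
  -- final assembly
  rw [hRiem, hT1, hT2, hXXs, hYYs, hXYs, hYXs, hTcEq, hTbEq, hBr, hHb, hHa, hHc1, hHc2,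
    hfbT (fderiv ℝ Xα x (Xα x)), hfaT (fderiv ℝ Xβ x (Xβ x)),
    hfcT (fderiv ℝ Xβ x (Xα x)), hfcT (fderiv ℝ Xα x (Xβ x))]
  linarith [hKa0, hKa1, hKa2, hKa3, hKb0, hKb1, hKb2, hKb3, hQaga, hQagb, hQbga, hQbgb,
    hddsypq (Xα x) (Xβ x) (Xα x) (Xβ x), hddsy12 (Xα x) (Xβ x) (Xα x) (Xβ x),
    hddsy12 (Xβ x) (Xα x) (Xα x) (Xβ x), hddsypq (Xβ x) (Xα x) (Xα x) (Xβ x),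
    hdGsy x (Xα x) (Xα x) (fderiv ℝ Xβ x (Xβ x)),
    hdGsy x (Xα x) (Xβ x) (fderiv ℝ Xβ x (Xα x)),
    hdGsy x (Xβ x) (Xα x) (fderiv ℝ Xα x (Xβ x)),
    hdGsy x (Xβ x) (Xα x) (fderiv ℝ Xβ x (Xα x)),
    hdGsy x (Xα x) (Xα x) (fderiv ℝ Xα x (Xβ x)),
    hdGsy x (Xβ x) (Xβ x) (fderiv ℝ Xα x (Xα x)),
    hdGsy x (Xα x) (Xβ x) (fderiv ℝ Xα x (Xα x)),
    hdGsy x (Xβ x) (Xβ x) (fderiv ℝ Xβ x (Xα x)),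
    hg_symm x (fderiv ℝ Xα x (Xα x)) (Γ x (Xβ x) (Xβ x)),
    hg_symm x (fderiv ℝ Xα x (Xα x)) (fderiv ℝ Xβ x (Xβ x)),
    hg_symm x (fderiv ℝ Xα x (Xβ x)) (Γ x (Xα x) (Xβ x)),
    hg_symm x (fderiv ℝ Xα x (Xβ x)) (fderiv ℝ Xβ x (Xα x)),
    hg_symm x (fderiv ℝ Xβ x (Xα x)) (Γ x (Xα x) (Xβ x)),
    hg_symm x (fderiv ℝ Xα x (Xα x)) (Γ x (Xα x) (Xβ x)),
    hg_symm x (fderiv ℝ Xβ x (Xβ x)) (Γ x (Xα x) (Xβ x)),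
    hg_symm x (fderiv ℝ Xβ x (Xβ x)) (Γ x (Xα x) (Xα x)),
    hg_symm x (fderiv ℝ Xα x (Xβ x)) (Γ x (Xα x) (Xα x)),
    hg_symm x (fderiv ℝ Xβ x (Xα x)) (Γ x (Xβ x) (Xβ x)),
    hg_symm x (fderiv ℝ (fun y => fderiv ℝ Xα y (Xβ x)) x (Xβ x)) (Xα x),
    hg_symm x (fderiv ℝ (fun y => fderiv ℝ Xβ y (Xα x)) x (Xα x)) (Xβ x),
    hg_symm x (fderiv ℝ (fun y => fderiv ℝ Xβ y (Xβ x)) x (Xα x)) (Xα x),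
    hg_symm x (fderiv ℝ (fun y => fderiv ℝ Xβ y (Xα x)) x (Xβ x)) (Xα x),
    hg_symm x (fderiv ℝ (fun y => fderiv ℝ Xα y (Xβ x)) x (Xα x)) (Xβ x),
    hg_symm x (fderiv ℝ (fun y => fderiv ℝ Xα y (Xα x)) x (Xβ x)) (Xα x),
    hg_symm x (fderiv ℝ (fun y => fderiv ℝ Xα y (Xβ x)) x (Xα x)) (Xα x),
    hg_symm x (fderiv ℝ (fun y => fderiv ℝ Xβ y (Xβ x)) x (Xα x)) (Xβ x)]
end
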